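/- arXiv:1611.01805 — 9 statements merged into one kernel-verified Lean document; each statement's English description precedes it below -/
import Mathlib

section
/- Let M be an m×n real matrix whose columns m_1,...,m_n each satisfy ||m_i||_2 ≤ 1. Then for any β ∈ (0,1], there exists a linear subspace W of ℝ^n with dim(W) ≥ (1-β)n such that for all y ∈ W, ||My||_2^2 ≤ (1/β)||y||_2^2. -/
/-!
The Gram operator `MᵀM` is positive and its trace, the sum of its eigenvalues, is the sum of
the squared column norms, hence at most `n`. By Markov's inequality at most `βn` eigenvalues
exceed `1/β`, so the eigenvectors of the remaining ones span a subspace of dimension at least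
`(1-β)n`, on which `‖My‖² = ⟪MᵀMy, y⟫ ≤ ‖y‖²/β`.
-/

open Module Finset RCLike
open scoped InnerProductSpace

variable {𝕜 E F : Type*} [RCLike 𝕜] [NormedAddCommGroup E] [InnerProductSpace 𝕜 E]
  [NormedAddCommGroup F] [InnerProductSpace 𝕜 F]

theorem Finset.card_filter_lt_mul_le_sum {ι : Type*} [Fintype ι] {μ : ι → ℝ}
    (hμ : ∀ i, 0 ≤ μ i) (c : ℝ) : (#{i | c < μ i} : ℝ) * c ≤ ∑ i, μ i := by
  rw [← nsmul_eq_mul]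
  calc #{i | c < μ i} • c ≤ ∑ i ∈ {i | c < μ i}, μ i :=
        card_nsmul_le_sum _ _ _ fun i hi => (mem_filter.1 hi).2.le
    _ ≤ ∑ i, μ i := sum_le_sum_of_subset_of_nonneg (subset_univ _) fun i _ _ => hμ i

theorem OrthonormalBasis.inner_eq_zero_of_mem_span_image {ι : Type*} [Fintype ι]
    (b : OrthonormalBasis ι 𝕜 E) {s : Set ι} {i : ι} (hi : i ∉ s) {y : E}
    (hy : y ∈ Submodule.span 𝕜 (b '' s)) : ⟪b i, y⟫_𝕜 = 0 := by
  suffices Submodule.span 𝕜 (b '' s) ≤ LinearMap.ker (innerₛₗ 𝕜 (b i)) from this hy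
  rw [Submodule.span_le]
  rintro _ ⟨j, hj, rfl⟩
  exact b.orthonormal.2 fun h => hi (h ▸ hj)

theorem OrthonormalBasis.finrank_span_image {ι : Type*} [Fintype ι]
    (b : OrthonormalBasis ι 𝕜 E) (s : Finset ι) :
    finrank 𝕜 (Submodule.span 𝕜 (b '' s)) = #s := by
  rw [Set.image_eq_range]
  exact (finrank_span_eq_card (b.orthonormal.linearIndependent.comp _ Subtype.coe_injective)).trans
    (Fintype.card_coe s)

namespace LinearMap.IsSymmetric

variable [FiniteDimensional 𝕜 E] {T : E →ₗ[𝕜] E} (hT : T.IsSymmetric) {n : ℕ}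
  (hn : finrank 𝕜 E = n)

theorem re_inner_map_self_eq_sum_eigenvalues (y : E) :
    re ⟪T y, y⟫_𝕜 = ∑ i, hT.eigenvalues hn i * ‖⟪hT.eigenvectorBasis hn i, y⟫_𝕜‖ ^ 2 := by
  set b := hT.eigenvectorBasis hn
  have hTb (i : Fin n) : ⟪T y, b i⟫_𝕜 = hT.eigenvalues hn i * ⟪y, b i⟫_𝕜 := by
    rw [hT, hT.apply_eigenvectorBasis, inner_smul_right]
  rw [← b.sum_inner_mul_inner, map_sum]
  refine Fintype.sum_congr _ _ fun i => ?_
  rw [hTb, mul_assoc, ← inner_conj_symm y, RCLike.conj_mul, ← ofReal_pow, ← ofReal_mul, ofReal_re]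

noncomputable def spectralSubspaceLE (c : ℝ) : Submodule 𝕜 E :=
  Submodule.span 𝕜 (hT.eigenvectorBasis hn '' ↑({i | hT.eigenvalues hn i ≤ c} : Finset (Fin n)))

theorem finrank_spectralSubspaceLE (c : ℝ) :
    finrank 𝕜 (hT.spectralSubspaceLE hn c) = #{i | hT.eigenvalues hn i ≤ c} :=
  (hT.eigenvectorBasis hn).finrank_span_image _

theorem re_inner_map_self_le_of_mem_spectralSubspaceLE {c : ℝ} {y : E}
    (hy : y ∈ hT.spectralSubspaceLE hn c) : re ⟪T y, y⟫_𝕜 ≤ c * ‖y‖ ^ 2 := by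
  rw [hT.re_inner_map_self_eq_sum_eigenvalues hn,
    ← (hT.eigenvectorBasis hn).sum_sq_norm_inner_right, mul_sum]
  refine sum_le_sum fun i _ => ?_
  by_cases hi : hT.eigenvalues hn i ≤ c
  · exact mul_le_mul_of_nonneg_right hi (sq_nonneg _)
  · rw [(hT.eigenvectorBasis hn).inner_eq_zero_of_mem_span_image (by simpa using hi) hy]
    simp

end LinearMap.IsSymmetric

namespace LinearMap

variable [FiniteDimensional 𝕜 E]

theorem IsPositive.sub_re_trace_div_le_finrank_spectralSubspaceLE {T : E →ₗ[𝕜] E}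
    (hT : T.IsPositive) {n : ℕ} (hn : finrank 𝕜 E = n) {c : ℝ} (hc : 0 < c) :
    n - re (T.trace 𝕜 E) / c ≤ finrank 𝕜 (hT.isSymmetric.spectralSubspaceLE hn c) := by
  set μ := hT.isSymmetric.eigenvalues hn
  have hsplit : (#{i | μ i ≤ c} : ℝ) + #{i | c < μ i} = n := by
    simp_rw [← not_le]
    exact_mod_cast (card_filter_add_card_filter_not _).trans (card_fin n)
  rw [hT.isSymmetric.re_trace_eq_sum_eigenvalues hn, hT.isSymmetric.finrank_spectralSubspaceLE,
    sub_le_iff_le_add, ← hsplit, add_le_add_iff_left, le_div_iff₀ hc]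
  exact card_filter_lt_mul_le_sum (hT.nonneg_eigenvalues hn) c

variable [FiniteDimensional 𝕜 F]

theorem re_trace_adjoint_comp_self {ι : Type*} [Fintype ι] (L : E →ₗ[𝕜] F)
    (e : OrthonormalBasis ι 𝕜 E) : re ((L.adjoint ∘ₗ L).trace 𝕜 E) = ∑ i, ‖L (e i)‖ ^ 2 := by
  simp [trace_eq_sum_inner _ e, adjoint_inner_right]

theorem exists_submodule_norm_sq_le {ι : Type*} [Fintype ι] (L : E →ₗ[𝕜] F)
    (e : OrthonormalBasis ι 𝕜 E) {c : ℝ} (hc : 0 < c) :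
    ∃ W : Submodule 𝕜 E, finrank 𝕜 E - (∑ i, ‖L (e i)‖ ^ 2) / c ≤ finrank 𝕜 W ∧
      ∀ y ∈ W, ‖L y‖ ^ 2 ≤ c * ‖y‖ ^ 2 := by
  have hT := L.isPositive_adjoint_comp_self
  refine ⟨hT.isSymmetric.spectralSubspaceLE rfl c, ?_, fun y hy => ?_⟩
  · rw [← re_trace_adjoint_comp_self L e]
    exact hT.sub_re_trace_div_le_finrank_spectralSubspaceLE rfl hc
  · have := hT.isSymmetric.re_inner_map_self_le_of_mem_spectralSubspaceLE rfl hy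
    rwa [comp_apply, adjoint_inner_left, inner_self_eq_norm_sq] at this

end LinearMap

/-- Lemma 7 (col1matr): if every column of an `m × n` real matrix `M` has `ℓ₂`-norm at
most `1`, then for any `β ∈ (0,1]` there is a subspace `W ⊆ ℝⁿ` with
`dim W ≥ (1-β)n` such that `‖My‖₂² ≤ (1/β)‖y‖₂²` for all `y ∈ W`. -/
theorem exists_subspace_contracting (m n : ℕ) (M : Matrix (Fin m) (Fin n) ℝ)
    (hcol : ∀ i : Fin n, ∑ j : Fin m, (M j i) ^ 2 ≤ 1)
    (β : ℝ) (hβ : β ∈ Set.Ioc (0 : ℝ) 1) :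
    ∃ W : Submodule ℝ (Fin n → ℝ),
      (1 - β) * n ≤ (Module.finrank ℝ W : ℝ) ∧
      ∀ y ∈ W, ∑ j : Fin m, (M.mulVec y j) ^ 2 ≤ (1 / β) * ∑ i : Fin n, (y i) ^ 2 := by
  obtain ⟨W, hdim, hW⟩ := (Matrix.toEuclideanLin M).exists_submodule_norm_sq_le
    (EuclideanSpace.basisFun (Fin n) ℝ) (one_div_pos.2 hβ.1)
  have hHS : ∑ i, ‖Matrix.toEuclideanLin M (EuclideanSpace.basisFun (Fin n) ℝ i)‖ ^ 2 ≤ n := by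
    simpa [EuclideanSpace.real_norm_sq_eq] using sum_le_sum fun i (_ : i ∈ univ) => hcol i
  refine ⟨W.map (WithLp.linearEquiv 2 ℝ (Fin n → ℝ)).toLinearMap, ?_, ?_⟩
  · rw [finrank_euclideanSpace_fin, one_div, div_inv_eq_mul] at hdim
    rw [LinearEquiv.finrank_map_eq]
    nlinarith [mul_le_mul_of_nonneg_right hHS hβ.1.le]
  · rintro _ ⟨y, hy, rfl⟩
    simpa [EuclideanSpace.real_norm_sq_eq] using hW y hy
end

section
/- Let G be an n×n positive semidefinite real matrix and β ∈ (0,1]. Then there exists a subspace W ⊆ ℝ^n with dim(W) ≥ (1-β)n such that for all w ∈ W, w^T G w ≤ (1/β) w^T diag(G) w, where diag(G) is the diagonal matrix agreeing with G on the diagonal. -/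
/-!
Put `F = diag(√G_ii)` and write `G = F C F` with `C` positive semidefinite and with every
diagonal entry `0` or `1`, so `tr C ≤ n`. At most `β · tr C ≤ βn` eigenvalues of `C` exceed
`1/β`, so the eigenvectors of the others span a subspace `U` of dimension `≥ (1 - β)n` on which
`uᵀ C u ≤ (1/β) |u|²`. Its preimage `W = F⁻¹(U)` is at least as large as `U`, and for `w ∈ W`,
`wᵀ G w = (Fw)ᵀ C (Fw) ≤ (1/β) |Fw|² = (1/β) wᵀ diag(G) w`.
-/

open Matrix

theorem Submodule.finrank_le_finrank_comap {K V : Type*} [DivisionRing K] [AddCommGroup V]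
    [Module K V] [FiniteDimensional K V] (f : V →ₗ[K] V) (U : Submodule K V) :
    Module.finrank K U ≤ Module.finrank K (U.comap f) := by
  have hker : LinearMap.ker (U.mkQ ∘ₗ f) = U.comap f := by
    rw [LinearMap.ker_comp, Submodule.ker_mkQ]
  have hrank := (U.mkQ ∘ₗ f).finrank_range_add_finrank_ker
  have hquot := U.finrank_quotient_add_finrank
  have hrange := Submodule.finrank_le (LinearMap.range (U.mkQ ∘ₗ f))
  rw [hker] at hrank
  omega

namespace Matrix

variable {ι : Type*} [Fintype ι]

lemma dotProduct_mulVec_transpose_mul_mul {R : Type*} [CommSemiring R] (A C : Matrix ι ι R)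
    (x : ι → R) : x ⬝ᵥ (Aᵀ * C * A) *ᵥ x = (A *ᵥ x) ⬝ᵥ C *ᵥ (A *ᵥ x) := by
  rw [← mulVec_mulVec, ← mulVec_mulVec, dotProduct_mulVec, vecMul_transpose]

variable [DecidableEq ι]

lemma dotProduct_diagonal_mulVec_self {R : Type*} [CommSemiring R] (d y : ι → R) :
    y ⬝ᵥ diagonal d *ᵥ y = ∑ j, d j * y j ^ 2 := by
  simp only [dotProduct, mulVec_diagonal]
  exact Finset.sum_congr rfl fun j _ => by ring

namespace IsHermitian

variable {C : Matrix ι ι ℝ} (hC : C.IsHermitian)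

lemma star_eigenvectorUnitary_eq_transpose :
    star (hC.eigenvectorUnitary : Matrix ι ι ℝ) = (hC.eigenvectorUnitary : Matrix ι ι ℝ)ᵀ :=
  conjTranspose_eq_transpose_of_trivial _

lemma dotProduct_mulVec_eq_sum_eigenvalues_mul_sq (x : ι → ℝ) :
    x ⬝ᵥ C *ᵥ x =
      ∑ j, hC.eigenvalues j * (star (hC.eigenvectorUnitary : Matrix ι ι ℝ) *ᵥ x) j ^ 2 := by
  conv_lhs => rw [hC.spectral_theorem]
  rw [hC.star_eigenvectorUnitary_eq_transpose, ← dotProduct_diagonal_mulVec_self,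
    ← dotProduct_mulVec_transpose_mul_mul, Unitary.conjStarAlgAut_apply,
    hC.star_eigenvectorUnitary_eq_transpose, transpose_transpose]
  simp

lemma dotProduct_self_eq_sum_sq_star_eigenvectorUnitary_mulVec (x : ι → ℝ) :
    x ⬝ᵥ x = ∑ j, (star (hC.eigenvectorUnitary : Matrix ι ι ℝ) *ᵥ x) j ^ 2 := by
  have horth := Unitary.mul_star_self_of_mem hC.eigenvectorUnitary.2
  rw [hC.star_eigenvectorUnitary_eq_transpose] at horth ⊢
  have h := dotProduct_mulVec_transpose_mul_mul (hC.eigenvectorUnitary : Matrix ι ι ℝ)ᵀ 1 x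
  rw [transpose_transpose, mul_one, horth, one_mulVec, one_mulVec] at h
  rw [h, dotProduct]
  exact Finset.sum_congr rfl fun j _ => (sq _).symm

end IsHermitian

namespace PosSemidef

open Finset

lemma mul_card_eigenvalues_gt_le_trace {C : Matrix ι ι ℝ} (hC : C.PosSemidef) (t : ℝ) :
    t * #{j | t < hC.1.eigenvalues j} ≤ C.trace := by
  rw [hC.1.trace_eq_sum_eigenvalues, ← nsmul_eq_mul', ← sum_const]
  calc ∑ _j ∈ {j | t < hC.1.eigenvalues j}, t
      ≤ ∑ j ∈ {j | t < hC.1.eigenvalues j}, hC.1.eigenvalues j :=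
        sum_le_sum fun j hj => (mem_filter.1 hj).2.le
    _ ≤ ∑ j, hC.1.eigenvalues j :=
        sum_le_sum_of_subset_of_nonneg (subset_univ _) fun j _ _ => hC.eigenvalues_nonneg j
    _ = ∑ j, (hC.1.eigenvalues j : ℝ) := rfl

theorem exists_finrank_ge_forall_dotProduct_mulVec_le {C : Matrix ι ι ℝ} (hC : C.PosSemidef)
    {t : ℝ} (ht : 0 < t) :
    ∃ U : Submodule ℝ (ι → ℝ), (Fintype.card ι : ℝ) - C.trace / t ≤ Module.finrank ℝ U ∧
      ∀ u ∈ U, u ⬝ᵥ C *ᵥ u ≤ t * (u ⬝ᵥ u) := by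
  let S : Finset ι := {j | t < hC.1.eigenvalues j}
  -- The span of the eigenvectors outside `S`, as the vectors whose eigen-coordinates vanish on `S`.
  let f := LinearMap.funLeft ℝ ℝ (Subtype.val : S → ι) ∘ₗ
    mulVecLin (star (hC.1.eigenvectorUnitary : Matrix ι ι ℝ))
  refine ⟨LinearMap.ker f, ?_, fun u hu => ?_⟩
  · have hker : Fintype.card ι ≤ #S + Module.finrank ℝ (LinearMap.ker f) := by
      have hrank := f.finrank_range_add_finrank_ker
      have hrange := Submodule.finrank_le (LinearMap.range f)
      rw [Module.finrank_fintype_fun_eq_card] at hrank hrange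
      simp only [Fintype.card_coe] at hrange
      omega
    have hS : (#S : ℝ) ≤ C.trace / t := by
      rw [le_div_iff₀ ht, mul_comm]
      exact hC.mul_card_eigenvalues_gt_le_trace t
    have : (Fintype.card ι : ℝ) ≤ #S + Module.finrank ℝ (LinearMap.ker f) := by
      exact_mod_cast hker
    linarith
  · have hS : ∀ j ∈ S, (star (hC.1.eigenvectorUnitary : Matrix ι ι ℝ) *ᵥ u) j = 0 :=
      fun j hj => congr_fun hu ⟨j, hj⟩
    rw [hC.1.dotProduct_mulVec_eq_sum_eigenvalues_mul_sq,
      hC.1.dotProduct_self_eq_sum_sq_star_eigenvectorUnitary_mulVec, mul_sum]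
    refine sum_le_sum fun j _ => ?_
    by_cases hj : j ∈ S
    · simp [hS j hj]
    · exact mul_le_mul_of_nonneg_right (not_lt.1 (by simpa [S] using hj)) (sq_nonneg _)

open scoped ComplexOrder in
lemma apply_eq_zero_of_diag_eq_zero {𝕜 : Type*} [RCLike 𝕜] {G : Matrix ι ι 𝕜}
    (hG : G.PosSemidef) {i : ι} (hi : G i i = 0) (j : ι) : G j i = 0 := by
  have hcol : G *ᵥ Pi.single i 1 = 0 := by
    rw [← hG.dotProduct_mulVec_zero_iff]
    simpa [mulVec_single_one, dotProduct, Pi.single_apply] using hi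
  simpa [mulVec_single_one] using congr_fun hcol j

theorem exists_eq_diagonal_sqrt_mul_mul {G : Matrix ι ι ℝ} (hG : G.PosSemidef) :
    ∃ C : Matrix ι ι ℝ, C.PosSemidef ∧ C.trace ≤ Fintype.card ι ∧
      G = diagonal (fun i => √(G i i)) * C * diagonal (fun i => √(G i i)) := by
  set s : ι → ℝ := fun i => √(G i i)
  have hs : ∀ i, s i = 0 → ∀ j, G i j = 0 ∧ G j i = 0 := fun i hi j => by
    have hGii : G i i = 0 := (Real.sqrt_eq_zero hG.diag_nonneg).1 hi
    refine ⟨?_, hG.apply_eq_zero_of_diag_eq_zero hGii j⟩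
    rw [← hG.1.apply, hG.apply_eq_zero_of_diag_eq_zero hGii j, star_zero]
  -- Where `G i i = 0` we get `(s i)⁻¹ = 0`; row and column `i` of `G` vanish, so `G = F C F` still.
  refine ⟨diagonal s⁻¹ * G * diagonal s⁻¹, ?_, ?_, ?_⟩
  · simpa using hG.conjTranspose_mul_mul_same (diagonal s⁻¹)
  · have hdiag : ∀ i, (s i)⁻¹ * G i i * (s i)⁻¹ ≤ 1 := fun i =>
      calc (s i)⁻¹ * G i i * (s i)⁻¹ = G i i / (√(G i i) * √(G i i)) := by ring
        _ = G i i / G i i := by rw [Real.mul_self_sqrt hG.diag_nonneg]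
        _ ≤ 1 := div_self_le_one _
    simpa [trace, mul_diagonal, diagonal_mul] using
      sum_le_sum fun i (_ : i ∈ univ) => hdiag i
  · ext i j
    rw [mul_diagonal, diagonal_mul, mul_diagonal, diagonal_mul]
    by_cases hi : s i = 0
    · simp [hi, (hs i hi j).1]
    by_cases hj : s j = 0
    · simp [hj, (hs j hj i).2]
    simp only [Pi.inv_apply]
    field_simp

end PosSemidef

end Matrix

/-- Lemma 8 (diagdom): for an `n × n` PSD real matrix `G` and `β ∈ (0,1]`, there is a
subspace `W ⊆ ℝⁿ` with `dim W ≥ (1-β)n` such that `wᵀ G w ≤ (1/β) wᵀ diag(G) w`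
for all `w ∈ W`. -/
theorem exists_subspace_diag_dominates (n : ℕ) (G : Matrix (Fin n) (Fin n) ℝ)
    (hG : G.PosSemidef) (β : ℝ) (hβ : β ∈ Set.Ioc (0 : ℝ) 1) :
    ∃ W : Submodule ℝ (Fin n → ℝ),
      (1 - β) * n ≤ (Module.finrank ℝ W : ℝ) ∧
      ∀ w ∈ W, w ⬝ᵥ G.mulVec w ≤ (1 / β) * (w ⬝ᵥ (Matrix.diagonal fun i => G i i).mulVec w) := by
  obtain ⟨C, hC, htrace, hGC⟩ := hG.exists_eq_diagonal_sqrt_mul_mul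
  set F := diagonal fun i => √(G i i)
  have hFt : Fᵀ = F := diagonal_transpose _
  obtain ⟨U, hUdim, hU⟩ := hC.exists_finrank_ge_forall_dotProduct_mulVec_le (one_div_pos.2 hβ.1)
  refine ⟨U.comap F.mulVecLin, ?_, fun w hw => ?_⟩
  · rw [Fintype.card_fin, div_div_eq_mul_div, div_one] at hUdim
    rw [Fintype.card_fin] at htrace
    have hcomap : (Module.finrank ℝ U : ℝ) ≤ Module.finrank ℝ (U.comap F.mulVecLin) := by
      exact_mod_cast U.finrank_le_finrank_comap F.mulVecLin
    nlinarith [hβ.1]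
  · have hD : diagonal (fun i => G i i) = Fᵀ * 1 * F := by
      rw [hFt, mul_one, diagonal_mul_diagonal]
      simp_rw [Real.mul_self_sqrt hG.diag_nonneg]
    have hG' : G = Fᵀ * C * F := by rw [hFt, ← hGC]
    rw [hD, hG', dotProduct_mulVec_transpose_mul_mul, dotProduct_mulVec_transpose_mul_mul,
      one_mulVec]
    exact hU _ hw
end

section
/- Let X be a real random variable with |X| ≤ 1 almost surely. Then for any θ > 0, E[e^{θX}] ≤ exp(θ·E[X] + (e^θ − θ − 1)·E[X^2]). -/
open MeasureTheory Real

lemma exp_tsum_real (x : ℝ) : Real.exp x = ∑' n : ℕ, x ^ n / (n.factorial : ℝ) := by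
  rw [Real.exp_eq_exp_ℝ, NormedSpace.exp_eq_tsum_div]

lemma key_pointwise (θ x : ℝ) (hθ : 0 < θ) (hx : |x| ≤ 1) :
    Real.exp (θ * x) ≤ 1 + θ * x + (Real.exp θ - θ - 1) * x ^ 2 := by
  have hsum1 : Summable (fun n : ℕ => (θ * x) ^ n / (n.factorial : ℝ)) := Real.summable_pow_div_factorial _
  have hsum2 : Summable (fun n : ℕ => θ ^ n / (n.factorial : ℝ) * x ^ 2) :=
    (Real.summable_pow_div_factorial θ).mul_right _
  set c : ℕ → ℝ := fun n => if n = 0 then 1 - x ^ 2 else if n = 1 then θ * x - θ * x ^ 2 else 0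
    with hc
  have hcsum : Summable c := summable_of_finite_support (by
    apply Set.Finite.subset (Set.finite_Icc 0 1)
    intro n hn
    simp only [Function.mem_support, hc] at hn
    by_contra h
    simp only [Set.mem_Icc] at h
    have hn1 : n ≠ 0 := by rintro rfl; simp at h
    have hn2 : n ≠ 1 := by rintro rfl; simp at h
    simp [hn1, hn2] at hn)
  have hsum3 : Summable (fun n => θ ^ n / (n.factorial : ℝ) * x ^ 2 + c n) := hsum2.add hcsum
  have hle : ∀ n : ℕ, (θ * x) ^ n / (n.factorial : ℝ) ≤ θ ^ n / (n.factorial : ℝ) * x ^ 2 + c n := by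
    intro n
    match n with
    | 0 => simp [hc]
    | 1 => simp [hc]
    | (k+2) =>
      have : c (k+2) = 0 := by simp [hc]
      rw [this, add_zero]
      rw [div_mul_eq_mul_div]
      apply div_le_div_of_nonneg_right _ (by positivity)
      rw [mul_pow]
      apply mul_le_mul_of_nonneg_left _ (by positivity)
      calc x ^ (k+2) ≤ |x ^ (k+2)| := le_abs_self _
        _ = |x| ^ (k+2) := (abs_pow _ _)
        _ ≤ |x| ^ 2 := pow_le_pow_of_le_one (abs_nonneg x) hx (by omega)
        _ = x ^ 2 := sq_abs x
  have h1 : Real.exp (θ * x) ≤ ∑' n, (θ ^ n / (n.factorial : ℝ) * x ^ 2 + c n) := by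
    rw [exp_tsum_real]
    exact Summable.tsum_le_tsum hle hsum1 hsum3
  have h2 : ∑' n, (θ ^ n / (n.factorial : ℝ) * x ^ 2 + c n)
      = Real.exp θ * x ^ 2 + ((1 - x ^ 2) + (θ * x - θ * x ^ 2)) := by
    rw [Summable.tsum_add hsum2 hcsum, tsum_mul_right]
    congr 1
    · rw [← exp_tsum_real]
    · rw [tsum_eq_sum (s := {0, 1}) (by
        intro n hn
        have hn1 : n ≠ 0 := by rintro rfl; simp at hn
        have hn2 : n ≠ 1 := by rintro rfl; simp at hn
        simp [hc, hn1, hn2])]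
      simp [hc]
  calc Real.exp (θ * x) ≤ _ := h1
    _ = _ := h2
    _ = 1 + θ * x + (Real.exp θ - θ - 1) * x ^ 2 := by ring

/-- Lemma 13: if `|X| ≤ 1` almost surely, then for any `θ > 0`,
`E[e^{θX}] ≤ exp(θ E[X] + (e^θ - θ - 1) E[X²])`. -/
theorem mgf_bound_of_abs_le_one {Ω : Type*} [MeasurableSpace Ω] (μ : Measure Ω)
    [IsProbabilityMeasure μ] (X : Ω → ℝ) (hX : Measurable X)
    (hbdd : ∀ᵐ ω ∂μ, |X ω| ≤ 1) (θ : ℝ) (hθ : 0 < θ) :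
    ∫ ω, Real.exp (θ * X ω) ∂μ ≤
      Real.exp (θ * ∫ ω, X ω ∂μ + (Real.exp θ - θ - 1) * ∫ ω, (X ω) ^ 2 ∂μ) := by
  have hXi : Integrable X μ := by
    apply Integrable.mono' (integrable_const 1) hX.aestronglyMeasurable hbdd
  have hX2i : Integrable (fun ω => (X ω) ^ 2) μ := by
    apply Integrable.mono' (integrable_const 1) (hX.pow_const 2).aestronglyMeasurable
    filter_upwards [hbdd] with ω h
    rw [Real.norm_eq_abs, abs_pow]
    calc |X ω| ^ 2 ≤ 1 ^ 2 := pow_le_pow_left₀ (abs_nonneg _) h 2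
      _ = 1 := one_pow 2
    -- note need |_| of pow
  have hexpi : Integrable (fun ω => Real.exp (θ * X ω)) μ := by
    apply Integrable.mono' (integrable_const (Real.exp θ)) ((hX.const_mul θ).exp).aestronglyMeasurable
    filter_upwards [hbdd] with ω h
    rw [Real.norm_eq_abs, abs_of_pos (Real.exp_pos _)]
    apply Real.exp_le_exp.mpr
    calc θ * X ω ≤ θ * |X ω| := by
          apply mul_le_mul_of_nonneg_left (le_abs_self _) hθ.le
      _ ≤ θ * 1 := mul_le_mul_of_nonneg_left h hθ.le
      _ = θ := mul_one θ
  have step1 : ∫ ω, Real.exp (θ * X ω) ∂μ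
      ≤ ∫ ω, (1 + θ * X ω + (Real.exp θ - θ - 1) * (X ω) ^ 2) ∂μ := by
    apply integral_mono_ae hexpi
    · exact ((integrable_const 1).add (hXi.const_mul θ)).add (hX2i.const_mul _)
    · filter_upwards [hbdd] with ω h
      exact key_pointwise θ (X ω) hθ h
  have step2 : ∫ ω, (1 + θ * X ω + (Real.exp θ - θ - 1) * (X ω) ^ 2) ∂μ
      = 1 + (θ * ∫ ω, X ω ∂μ + (Real.exp θ - θ - 1) * ∫ ω, (X ω) ^ 2 ∂μ) := by
    have hA : Integrable (fun ω => 1 + θ * X ω) μ := (integrable_const 1).add (hXi.const_mul θ)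
    rw [integral_add hA (hX2i.const_mul _),
      integral_add (integrable_const 1) (hXi.const_mul θ),
      integral_const, integral_const_mul, integral_const_mul]
    simp [add_assoc]
  calc ∫ ω, Real.exp (θ * X ω) ∂μ ≤ _ := step1
    _ = _ := step2
    _ ≤ _ := by
        rw [add_comm]
        exact Real.add_one_le_exp _
end

section
/- The function f(x) = (e^{θx} − θx − 1)/x^2 for x ≠ 0, extended by f(0) = θ^2/2, is monotonically increasing on ℝ for any fixed θ > 0. Consequently, e^{θx} ≤ f(1)x^2 + 1 + θx for all x ≤ 1. -/
/-!
Substituting `t = θx` gives `f x = θ² g (θx)` with `g t = (eᵗ - t - 1)/t²`, `g 0 = 1/2`.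
Away from `0`, `g' t = ((t - 2)eᵗ + t + 2)/t³`; the numerator vanishes at `0` and has derivative
`(t - 1)eᵗ + 1 = eᵗ (e⁻ᵗ - (1 - t)) > 0` for `t ≠ 0`, so it has the sign of `t` and `g' > 0`.
Across `0`, the strict second-order Taylor bounds for `exp` put `g` below `1/2` on the left and
above it on the right. The inequality for `x ≤ 1` is `f x ≤ f 1` multiplied by `x²`, since
`f x * x² = e^{θx} - θx - 1` holds also at `x = 0`.
-/

open Real Set

theorem StrictMono.of_strictMonoOn_Iio_Ioi {α β : Type*} [LinearOrder α] [Preorder β]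
    {f : α → β} {a : α} (h₁ : StrictMonoOn f (Iio a)) (h₂ : StrictMonoOn f (Ioi a))
    (hlt : ∀ x < a, f x < f a) (hgt : ∀ x, a < x → f a < f x) : StrictMono f := by
  refine StrictMonoOn.Iic_union_Ici (a := a) (fun x hx y hy hxy => ?_) fun x hx y hy hxy => ?_
  · rcases (mem_Iic.1 hy).lt_or_eq with hy | rfl
    · exact h₁ (hxy.trans hy) hy hxy
    · exact hlt x hxy
  · rcases (mem_Ici.1 hx).lt_or_eq with hx | rfl
    · exact h₂ hx (hx.trans hxy) hxy
    · exact hgt y hxy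

theorem strictMono_of_hasDerivAt_pos_of_ne {f f' : ℝ → ℝ} {a : ℝ}
    (hf : ∀ x, HasDerivAt f (f' x) x) (hf' : ∀ x ≠ a, 0 < f' x) : StrictMono f := by
  have hcont : Continuous f := continuous_iff_continuousAt.2 fun x => (hf x).continuousAt
  refine StrictMonoOn.Iic_union_Ici (a := a) ?_ ?_
  · refine strictMonoOn_of_hasDerivWithinAt_pos (convex_Iic a) hcont.continuousOn
      (fun x _ => (hf x).hasDerivWithinAt) fun x hx => hf' x ?_
    rw [interior_Iic] at hx
    exact hx.ne
  · refine strictMonoOn_of_hasDerivWithinAt_pos (convex_Ici a) hcont.continuousOn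
      (fun x _ => (hf x).hasDerivWithinAt) fun x hx => hf' x ?_
    rw [interior_Ici] at hx
    exact hx.ne'

theorem strictMonoOn_of_hasDerivAt_pos {D : Set ℝ} (hD : Convex ℝ D)
    {f f' : ℝ → ℝ} (hf : ∀ x ∈ D, HasDerivAt f (f' x) x) (hf' : ∀ x ∈ D, 0 < f' x) :
    StrictMonoOn f D :=
  strictMonoOn_of_hasDerivWithinAt_pos hD (fun x hx => (hf x hx).continuousAt.continuousWithinAt)
    (fun x hx => (hf x (interior_subset hx)).hasDerivWithinAt)
    fun x hx => hf' x (interior_subset hx)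

theorem strictMono_exp_sub_quadratic :
    StrictMono fun t => exp t - (1 + t + t ^ 2 / 2) := by
  refine strictMono_of_hasDerivAt_pos_of_ne (f' := fun t => exp t - (1 + t)) (a := 0)
    (fun t => ?_) fun t ht => sub_pos.2 (by simpa [add_comm] using add_one_lt_exp ht)
  refine ((hasDerivAt_exp t).sub (((hasDerivAt_id t).const_add 1).add
    ((hasDerivAt_pow 2 t).div_const 2))).congr_deriv ?_
  ring

theorem exp_lt_quadratic_of_neg {t : ℝ} (ht : t < 0) : exp t < 1 + t + t ^ 2 / 2 := by
  simpa using strictMono_exp_sub_quadratic ht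

theorem quadratic_lt_exp_of_pos {t : ℝ} (ht : 0 < t) : 1 + t + t ^ 2 / 2 < exp t := by
  simpa using strictMono_exp_sub_quadratic ht

theorem sub_one_mul_exp_add_one_pos {t : ℝ} (ht : t ≠ 0) : 0 < (t - 1) * exp t + 1 := by
  have h : (t - 1) * exp t + 1 = exp t * (exp (-t) - (-t + 1)) := by
    rw [mul_sub, ← exp_add, add_neg_cancel, exp_zero]; ring
  rw [h]
  exact mul_pos (exp_pos t) (sub_pos.2 (add_one_lt_exp (neg_ne_zero.2 ht)))

theorem strictMono_sub_two_mul_exp_add :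
    StrictMono fun t => (t - 2) * exp t + t + 2 := by
  refine strictMono_of_hasDerivAt_pos_of_ne (f' := fun t => (t - 1) * exp t + 1) (a := 0)
    (fun t => ?_) fun t ht => sub_one_mul_exp_add_one_pos ht
  refine ((((hasDerivAt_id' t).sub_const 2).mul (hasDerivAt_exp t)).add
    (hasDerivAt_id' t)).add_const 2 |>.congr_deriv ?_
  ring

noncomputable def expQuadraticRatio (t : ℝ) : ℝ :=
  if t = 0 then 1 / 2 else (exp t - t - 1) / t ^ 2

theorem expQuadraticRatio_zero : expQuadraticRatio 0 = 1 / 2 := if_pos rfl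

theorem expQuadraticRatio_of_ne_zero {t : ℝ} (ht : t ≠ 0) :
    expQuadraticRatio t = (exp t - t - 1) / t ^ 2 := if_neg ht

theorem expQuadraticRatio_mul_sq (t : ℝ) : expQuadraticRatio t * t ^ 2 = exp t - t - 1 := by
  rcases eq_or_ne t 0 with rfl | ht
  · simp
  · rw [expQuadraticRatio_of_ne_zero ht, div_mul_cancel₀ _ (pow_ne_zero 2 ht)]

theorem hasDerivAt_expQuadraticRatio {t : ℝ} (ht : t ≠ 0) :
    HasDerivAt expQuadraticRatio (((t - 2) * exp t + t + 2) / t ^ 3) t := by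
  have hquot : HasDerivAt (fun s => (exp s - s - 1) / s ^ 2)
      (((exp t - 1) * t ^ 2 - (exp t - t - 1) * (2 * t)) / (t ^ 2) ^ 2) t := by
    simpa using ((hasDerivAt_exp t).sub (hasDerivAt_id' t)).sub_const 1 |>.fun_div
      (hasDerivAt_pow 2 t) (pow_ne_zero 2 ht)
  refine (hquot.congr_of_eventuallyEq ?_).congr_deriv ?_
  · filter_upwards [isOpen_ne.mem_nhds ht] with s hs
    exact expQuadraticRatio_of_ne_zero hs
  · field_simp
    ring

theorem sub_two_mul_exp_add_div_pow_three_pos {t : ℝ} (ht : t ≠ 0) :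
    0 < ((t - 2) * exp t + t + 2) / t ^ 3 := by
  rcases ht.lt_or_gt with ht | ht
  · have hH : (t - 2) * exp t + t + 2 < (0 - 2) * exp 0 + 0 + 2 :=
      strictMono_sub_two_mul_exp_add ht
    norm_num at hH
    exact div_pos_of_neg_of_neg hH (Odd.pow_neg (by decide) ht)
  · have hH : (0 - 2) * exp 0 + 0 + 2 < (t - 2) * exp t + t + 2 :=
      strictMono_sub_two_mul_exp_add ht
    norm_num at hH
    exact div_pos hH (pow_pos ht 3)

theorem expQuadraticRatio_lt_half {t : ℝ} (ht : t < 0) : expQuadraticRatio t < 1 / 2 := by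
  rw [expQuadraticRatio_of_ne_zero ht.ne, div_lt_iff₀ (pow_two_pos_of_ne_zero ht.ne)]
  linarith [exp_lt_quadratic_of_neg ht]

theorem half_lt_expQuadraticRatio {t : ℝ} (ht : 0 < t) : 1 / 2 < expQuadraticRatio t := by
  rw [expQuadraticRatio_of_ne_zero ht.ne', lt_div_iff₀ (pow_pos ht 2)]
  linarith [quadratic_lt_exp_of_pos ht]

theorem strictMono_expQuadraticRatio : StrictMono expQuadraticRatio := by
  have hmono : ∀ D ⊆ ({0}ᶜ : Set ℝ), Convex ℝ D → StrictMonoOn expQuadraticRatio D :=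
    fun D hD hconv => strictMonoOn_of_hasDerivAt_pos hconv
      (fun t ht => hasDerivAt_expQuadraticRatio (hD ht))
      fun t ht => sub_two_mul_exp_add_div_pow_three_pos (hD ht)
  refine .of_strictMonoOn_Iio_Ioi (a := 0) (hmono _ (fun t ht => ne_of_lt ht) (convex_Iio 0))
    (hmono _ (fun t ht => ne_of_gt ht) (convex_Ioi 0)) (fun t ht => ?_) fun t ht => ?_
  · exact expQuadraticRatio_zero ▸ expQuadraticRatio_lt_half ht
  · exact expQuadraticRatio_zero ▸ half_lt_expQuadraticRatio ht

/-- For fixed `θ > 0`, the function `f(x) = (e^{θx} - θx - 1)/x²` (with `f(0) = θ²/2`)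
is monotonically increasing on `ℝ`; consequently `e^{θx} ≤ f(1)x² + 1 + θx` for all
`x ≤ 1`, where `f(1) = e^θ - θ - 1`. -/
theorem monotone_exp_quadratic_ratio (θ : ℝ) (hθ : 0 < θ) (f : ℝ → ℝ)
    (hf : ∀ x, f x = if x = 0 then θ ^ 2 / 2 else (Real.exp (θ * x) - θ * x - 1) / x ^ 2) :
    Monotone f ∧ ∀ x ≤ (1 : ℝ), Real.exp (θ * x) ≤ f 1 * x ^ 2 + 1 + θ * x := by
  have hf_eq : ∀ x, f x = θ ^ 2 * expQuadraticRatio (θ * x) := by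
    intro x
    rcases eq_or_ne x 0 with rfl | hx
    · rw [hf, if_pos rfl, mul_zero, expQuadraticRatio_zero]
      ring
    · rw [hf, if_neg hx, expQuadraticRatio_of_ne_zero (mul_ne_zero hθ.ne' hx)]
      field_simp
  have hmono : Monotone f := fun a b hab => by
    rw [hf_eq, hf_eq]
    gcongr
    exact strictMono_expQuadraticRatio.monotone (by gcongr)
  refine ⟨hmono, fun x hx => ?_⟩
  have hfx : f x * x ^ 2 = exp (θ * x) - θ * x - 1 := by
    rw [hf_eq, ← expQuadraticRatio_mul_sq]
    ring
  linarith [mul_le_mul_of_nonneg_right (hmono hx) (sq_nonneg x)]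
end

section
/- Let Y_0 = 0, Y_1,...,Y_n be a sequence of random variables adapted to a filtration such that for all t: |Y_t − Y_{t−1}| ≤ 1 almost surely, and E[Y_t − Y_{t−1} | F_{t−1}] ≤ −α·E[(Y_t − Y_{t−1})^2 | F_{t−1}] for some α ∈ (0, 1/2). Then for all λ ≥ 0, P[Y_n ≥ λ] ≤ exp(−αλ). -/
/-!
Since `|αD| ≤ 1` for every increment `D`, the bound `exp u ≤ 1 + u + u²` on `[-1, 1]` and the
drift condition give `E[exp (αD) | F] ≤ 1 + α E[D | F] + α² E[D² | F] ≤ 1`. Hence `exp (α Y_t)`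
is a supermartingale starting at `1`, so `E[exp (α Y_n)] ≤ 1`, and the Chernoff bound gives
`P[Y_n ≥ λ] ≤ exp (-αλ) E[exp (α Y_n)] ≤ exp (-αλ)`.
-/

open MeasureTheory ProbabilityTheory Real

lemma Real.exp_le_one_add_add_sq {u : ℝ} (hu : |u| ≤ 1) : exp u ≤ 1 + u + u ^ 2 := by
  linarith [(abs_le.1 (abs_exp_sub_one_sub_id_le hu)).2]

section

variable {Ω : Type*} {m m0 : MeasurableSpace Ω} {μ : Measure Ω}

lemma ae_norm_exp_mul_le_of_abs_le {D : Ω → ℝ} {c : ℝ} (hbdd : ∀ᵐ ω ∂μ, |D ω| ≤ c) (a : ℝ) :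
    ∀ᵐ ω ∂μ, ‖exp (a * D ω)‖ ≤ exp (|a| * c) := by
  filter_upwards [hbdd] with ω hω
  rw [norm_of_nonneg (exp_pos _).le, exp_le_exp]
  calc a * D ω ≤ |a * D ω| := le_abs_self _
    _ = |a| * |D ω| := abs_mul a (D ω)
    _ ≤ |a| * c := mul_le_mul_of_nonneg_left hω (abs_nonneg a)

variable [IsFiniteMeasure μ]

lemma integrable_exp_mul_of_abs_le {D : Ω → ℝ} {c : ℝ} (hD : AEStronglyMeasurable D μ)
    (hbdd : ∀ᵐ ω ∂μ, |D ω| ≤ c) (a : ℝ) : Integrable (fun ω => exp (a * D ω)) μ :=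
  .of_bound (continuous_exp.comp_aestronglyMeasurable (hD.const_mul a)) _
    (ae_norm_exp_mul_le_of_abs_le hbdd a)

lemma condExp_one_add_mul_add_mul (hm : m ≤ m0) {f g : Ω → ℝ} (hf : Integrable f μ)
    (hg : Integrable g μ) (a b : ℝ) :
    μ[fun ω => 1 + a * f ω + b * g ω | m] =ᵐ[μ] fun ω => 1 + a * μ[f | m] ω + b * μ[g | m] ω := by
  have haf : Integrable (fun ω => a * f ω) μ := hf.const_mul a
  have h_sum : μ[fun ω => (1 + a * f ω) + b * g ω | m] =ᵐ[μ]
      μ[fun ω => 1 + a * f ω | m] + μ[fun ω => b * g ω | m] :=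
    condExp_add ((integrable_const 1).add haf) (hg.const_mul b) m
  have h_one : μ[fun ω => (1 : ℝ) + a * f ω | m] =ᵐ[μ]
      μ[fun _ => (1 : ℝ) | m] + μ[fun ω => a * f ω | m] :=
    condExp_add (integrable_const 1) haf m
  have h_af : μ[fun ω => a * f ω | m] =ᵐ[μ] fun ω => a * μ[f | m] ω := condExp_smul a f m
  have h_bg : μ[fun ω => b * g ω | m] =ᵐ[μ] fun ω => b * μ[g | m] ω := condExp_smul b g m
  filter_upwards [h_sum, h_one, h_af, h_bg] with ω h_sum h_one h_af h_bg
  simp only [Pi.add_apply] at h_sum h_one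
  rw [h_sum, h_one, h_af, h_bg, condExp_const hm]

lemma condExp_exp_mul_le_one (hm : m ≤ m0) {D : Ω → ℝ} {a : ℝ} (ha0 : 0 ≤ a) (ha1 : a ≤ 1)
    (hD : AEStronglyMeasurable D μ) (hbdd : ∀ᵐ ω ∂μ, |D ω| ≤ 1)
    (hdrift : ∀ᵐ ω ∂μ, μ[D | m] ω ≤ -a * μ[fun ω => D ω ^ 2 | m] ω) :
    ∀ᵐ ω ∂μ, μ[fun ω => exp (a * D ω) | m] ω ≤ 1 := by
  have hD_int : Integrable D μ := .of_bound hD 1 (by simpa only [norm_eq_abs] using hbdd)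
  have hD2_int : Integrable (fun ω => D ω ^ 2) μ := by
    refine .of_bound (hD.pow 2) 1 ?_
    filter_upwards [hbdd] with ω hω
    rw [norm_pow, norm_eq_abs]
    exact pow_le_one₀ (abs_nonneg _) hω
  have hexp_le : (fun ω => exp (a * D ω)) ≤ᵐ[μ] fun ω => 1 + a * D ω + a ^ 2 * D ω ^ 2 := by
    filter_upwards [hbdd] with ω hω
    have haD : |a * D ω| ≤ 1 := by
      rw [abs_mul, abs_of_nonneg ha0]
      exact mul_le_one₀ ha1 (abs_nonneg _) hω
    simpa only [mul_pow] using exp_le_one_add_add_sq haD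
  have hbound_int : Integrable (fun ω => 1 + a * D ω + a ^ 2 * D ω ^ 2) μ :=
    ((integrable_const 1).add (hD_int.const_mul a)).add (hD2_int.const_mul (a ^ 2))
  filter_upwards
    [condExp_mono (m := m) (integrable_exp_mul_of_abs_le hD hbdd a) hbound_int hexp_le,
      condExp_one_add_mul_add_mul hm hD_int hD2_int a (a ^ 2), hdrift] with ω h_mono h_lin h_drift
  rw [h_lin] at h_mono
  nlinarith [mul_le_mul_of_nonneg_left h_drift ha0]

lemma condExp_exp_mul_add_le (hm : m ≤ m0) {X D : Ω → ℝ} {a : ℝ} (ha0 : 0 ≤ a) (ha1 : a ≤ 1)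
    (hX : StronglyMeasurable[m] X) (hXD : Integrable (fun ω => exp (a * (X ω + D ω))) μ)
    (hD : AEStronglyMeasurable D μ) (hbdd : ∀ᵐ ω ∂μ, |D ω| ≤ 1)
    (hdrift : ∀ᵐ ω ∂μ, μ[D | m] ω ≤ -a * μ[fun ω => D ω ^ 2 | m] ω) :
    μ[fun ω => exp (a * (X ω + D ω)) | m] ≤ᵐ[μ] fun ω => exp (a * X ω) := by
  have hsplit : (fun ω => exp (a * (X ω + D ω))) =
      (fun ω => exp (a * X ω)) * fun ω => exp (a * D ω) := by
    ext ω
    simp only [Pi.mul_apply, mul_add, exp_add]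
  rw [hsplit] at hXD ⊢
  filter_upwards [condExp_mul_of_stronglyMeasurable_left
      (continuous_exp.comp_stronglyMeasurable (hX.const_mul a)) hXD
      (integrable_exp_mul_of_abs_le hD hbdd a),
    condExp_exp_mul_le_one hm ha0 ha1 hD hbdd hdrift] with ω h_pull h_le_one
  rw [h_pull, Pi.mul_apply]
  exact mul_le_of_le_one_right (exp_pos _).le h_le_one

lemma supermartingale_exp_mul {ℱ : Filtration ℕ m0} {Y : ℕ → Ω → ℝ} (hadapted : Adapted ℱ Y)
    {a : ℝ} (ha0 : 0 ≤ a) (ha1 : a ≤ 1) (hint0 : Integrable (fun ω => exp (a * Y 0 ω)) μ)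
    (hbdd : ∀ t, ∀ᵐ ω ∂μ, |Y (t + 1) ω - Y t ω| ≤ 1)
    (hdrift : ∀ t, ∀ᵐ ω ∂μ,
      μ[fun ω' => Y (t + 1) ω' - Y t ω' | ℱ t] ω ≤
        -a * μ[fun ω' => (Y (t + 1) ω' - Y t ω') ^ 2 | ℱ t] ω) :
    Supermartingale (fun t ω => exp (a * Y t ω)) ℱ μ := by
  have hmeas : ∀ t, StronglyMeasurable[ℱ t] (Y t) := fun t => (hadapted t).stronglyMeasurable
  have hincr : ∀ t, AEStronglyMeasurable (fun ω => Y (t + 1) ω - Y t ω) μ := fun t =>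
    (((hmeas (t + 1)).mono (ℱ.le _)).sub ((hmeas t).mono (ℱ.le _))).aestronglyMeasurable
  have hsucc : ∀ t, (fun ω => exp (a * Y (t + 1) ω)) =
      fun ω => exp (a * (Y t ω + (Y (t + 1) ω - Y t ω))) := fun t => by simp only [add_sub_cancel]
  have hint : ∀ t, Integrable (fun ω => exp (a * Y t ω)) μ := by
    intro t
    induction t with
    | zero => exact hint0
    | succ t ih =>
      rw [hsucc]
      simp only [mul_add, exp_add]
      exact ih.mul_bdd (integrable_exp_mul_of_abs_le (hincr t) (hbdd t) a).aestronglyMeasurable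
        (ae_norm_exp_mul_le_of_abs_le (hbdd t) a)
  refine supermartingale_nat
    (fun t => continuous_exp.comp_stronglyMeasurable ((hmeas t).const_mul a)) hint fun t => ?_
  rw [hsucc]
  exact condExp_exp_mul_add_le (ℱ.le t) ha0 ha1 (hmeas t) (hsucc t ▸ hint (t + 1)) (hincr t)
    (hbdd t) (hdrift t)

end

theorem freedman_drift_tail_general {Ω : Type*} {m0 : MeasurableSpace Ω} (μ : Measure Ω)
    [IsProbabilityMeasure μ] (ℱ : Filtration ℕ m0) (n : ℕ) (Y : ℕ → Ω → ℝ)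
    (hadapted : Adapted ℱ Y) (hY0 : ∀ ω, Y 0 ω = 0) (α : ℝ)
    (hα : α ∈ Set.Ioo (0 : ℝ) (1 / 2))
    (hbdd : ∀ t, ∀ᵐ ω ∂μ, |Y (t + 1) ω - Y t ω| ≤ 1)
    (hdrift : ∀ t, ∀ᵐ ω ∂μ,
      (μ[fun ω' => Y (t + 1) ω' - Y t ω' | ℱ t]) ω ≤
        -α * (μ[fun ω' => (Y (t + 1) ω' - Y t ω') ^ 2 | ℱ t]) ω)
    (lam : ℝ) :
    μ {ω | lam ≤ Y n ω} ≤ ENNReal.ofReal (Real.exp (-α * lam)) := by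
  obtain ⟨hα0, hα_half⟩ := hα
  have hsuper : Supermartingale (fun t ω => exp (α * Y t ω)) ℱ μ :=
    supermartingale_exp_mul hadapted hα0.le (by linarith) (by simp [hY0]) hbdd hdrift
  have hmgf : mgf (Y n) μ α ≤ 1 := by
    simpa [mgf, hY0] using hsuper.setIntegral_le (Nat.zero_le n) MeasurableSet.univ
  have hchernoff := measure_ge_le_exp_mul_mgf lam hα0.le (hsuper.integrable n)
  rw [← ENNReal.ofReal_toReal (measure_ne_top μ _)]
  exact ENNReal.ofReal_le_ofReal (hchernoff.trans (mul_le_of_le_one_right (exp_pos _).le hmgf))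

/-- Freedman-type inequality (Theorem 15): if `Y₀ = 0`, the increments `Y_t - Y_{t-1}`
are bounded by `1` and satisfy the conditional drift condition
`E[Y_t - Y_{t-1} | F_{t-1}] ≤ -α E[(Y_t - Y_{t-1})² | F_{t-1}]` for some `α ∈ (0, 1/2)`,
then `P[Y_n ≥ λ] ≤ exp(-αλ)` for every `λ ≥ 0`. -/
theorem freedman_drift_tail {Ω : Type*} {m0 : MeasurableSpace Ω} (μ : Measure Ω)
    [IsProbabilityMeasure μ] (ℱ : Filtration ℕ m0) (n : ℕ) (Y : ℕ → Ω → ℝ)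
    (hadapted : Adapted ℱ Y) (hY0 : ∀ ω, Y 0 ω = 0) (α : ℝ)
    (hα : α ∈ Set.Ioo (0 : ℝ) (1 / 2))
    (hbdd : ∀ t, ∀ᵐ ω ∂μ, |Y (t + 1) ω - Y t ω| ≤ 1)
    (hdrift : ∀ t, ∀ᵐ ω ∂μ,
      (μ[fun ω' => Y (t + 1) ω' - Y t ω' | ℱ t]) ω ≤
        -α * (μ[fun ω' => (Y (t + 1) ω' - Y t ω') ^ 2 | ℱ t]) ω)
    (lam : ℝ) (hlam : 0 ≤ lam) :
    μ {ω | lam ≤ Y n ω} ≤ ENNReal.ofReal (Real.exp (-α * lam)) :=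
  freedman_drift_tail_general μ ℱ n Y hadapted hY0 α hα hbdd hdrift lam
end

section
/- Dual lower bound for universal vector colorings: let w_1,...,w_ℓ ∈ ℝ^n with ℓ = δn, β ∈ (0, 1−δ). Suppose η ∈ ℝ^ℓ, G ⪰ 0, q ≥ 0 satisfy ∑_k η_k w_k w_k^T + G − (1/β)diag(G) + ∑_i q_i e_i e_i^T ⪰ I. Then ∑_i q_i ≥ (1 − δ − β)n. -/
/-! Let `S` be the subspace orthogonal to all `w k`; it has dimension at least `n - ℓ`. By
Sylvester's law of inertia, `S` contains subspaces `V` and `W` with `dim V + dim W = dim S` such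
that the form `x ↦ ⟪x, (G - β⁻¹ diag G) x⟫` is positive definite on `V` and nonpositive on `W`.

On `W` the feasibility constraint reduces to `‖x‖² ≤ ∑ qᵢ xᵢ²`; summing it over an orthonormal
basis of `W` gives `dim W ≤ tr (diag q) = ∑ qᵢ`. On `V` we have `⟪x, diag(G) x⟫ < β ⟪x, G x⟫`;
after the substitution `y = diag(G)^{1/2} x` this reads `‖y‖² < β ⟪y, R y⟫` for the PSD matrix
`R = diag(G)^{-1/2} G diag(G)^{-1/2}`, whose diagonal entries are at most `1`, and summing over an
orthonormal basis gives `dim V ≤ β tr R ≤ β n`. Hence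
`∑ qᵢ ≥ dim W = dim S - dim V ≥ n - ℓ - β n`. -/

open Matrix Module
open scoped InnerProductSpace

section Trace

variable {E : Type*} [NormedAddCommGroup E] [InnerProductSpace ℝ E] [FiniteDimensional ℝ E]

theorem LinearMap.IsPositive.sum_inner_le_trace {T : E →ₗ[ℝ] E} (hT : T.IsPositive)
    {ι : Type*} [Fintype ι] {v : ι → E} (hv : Orthonormal ℝ v) :
    ∑ i, ⟪v i, T (v i)⟫_ℝ ≤ LinearMap.trace ℝ E T := by
  classical
  have hrange : Orthonormal ℝ ((↑) : Set.range v → E) :=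
    (orthonormal_subtype_range hv.linearIndependent.injective).2 hv
  obtain ⟨u, b, hvu, hb⟩ := hrange.exists_orthonormalBasis_extension
  rw [T.trace_eq_sum_inner b, hb, Finset.sum_coe_sort u fun x => ⟪x, T x⟫_ℝ]
  calc ∑ i, ⟪v i, T (v i)⟫_ℝ = ∑ x ∈ Finset.univ.image v, ⟪x, T x⟫_ℝ :=
        (Finset.sum_image (f := fun x => ⟪x, T x⟫_ℝ) fun i _ j _ h =>
          hv.linearIndependent.injective h).symm
    _ ≤ ∑ x ∈ u, ⟪x, T x⟫_ℝ := by
        refine Finset.sum_le_sum_of_subset_of_nonneg ?_ fun x _ _ => hT.inner_nonneg_right x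
        rintro _ hx
        obtain ⟨i, -, rfl⟩ := Finset.mem_image.mp hx
        exact hvu (Set.mem_range_self i)

theorem LinearMap.IsPositive.finrank_le_mul_trace {T : E →ₗ[ℝ] E} (hT : T.IsPositive)
    {c : ℝ} (hc : 0 ≤ c) (V : Submodule ℝ E) (hV : ∀ x ∈ V, ‖x‖ ^ 2 ≤ c * ⟪x, T x⟫_ℝ) :
    (finrank ℝ V : ℝ) ≤ c * LinearMap.trace ℝ E T := by
  let b := stdOrthonormalBasis ℝ V
  have hb : Orthonormal ℝ fun i => (b i : E) := b.orthonormal.comp_linearIsometry V.subtypeₗᵢ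
  calc (finrank ℝ V : ℝ) = ∑ i, ‖(b i : E)‖ ^ 2 := by simp [hb.1]
    _ ≤ ∑ i, c * ⟪(b i : E), T (b i)⟫_ℝ := Finset.sum_le_sum fun i _ => hV _ (b i).2
    _ ≤ c * LinearMap.trace ℝ E T := by
        rw [← Finset.mul_sum]
        exact mul_le_mul_of_nonneg_left (hT.sum_inner_le_trace hb) hc

end Trace

theorem Matrix.trace_toEuclideanLin {m : Type*} [Fintype m] [DecidableEq m]
    (M : Matrix m m ℝ) : LinearMap.trace ℝ _ (toEuclideanLin M) = M.trace := by
  rw [LinearMap.trace_eq_sum_inner _ (EuclideanSpace.basisFun m ℝ)]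
  simp [Matrix.trace, EuclideanSpace.inner_single_left, Matrix.toLpLin_apply, mulVec_single]

theorem Matrix.PosSemidef.sq_apply_le {m : Type*} [Fintype m] [DecidableEq m]
    {G : Matrix m m ℝ} (hG : G.PosSemidef) (i j : m) : G i j ^ 2 ≤ G i i * G j j := by
  have hdet := (hG.submatrix ![i, j]).det_nonneg
  rw [det_fin_two] at hdet
  have hsymm : G j i = G i j := hG.isHermitian.apply i j
  simp only [submatrix_apply, Matrix.cons_val_zero, Matrix.cons_val_one, hsymm] at hdet
  nlinarith

section Correlation

variable {m : Type*} [Fintype m] [DecidableEq m]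

/-- Where `G i i = 0` the factor `(√(G i i))⁻¹` is the junk value `0`; this is harmless because
row and column `i` of a PSD matrix then vanish. -/
noncomputable def Matrix.correlation (G : Matrix m m ℝ) : Matrix m m ℝ :=
  diagonal (fun i => (√(G i i))⁻¹) * G * diagonal (fun i => (√(G i i))⁻¹)

theorem Matrix.PosSemidef.correlation {G : Matrix m m ℝ} (hG : G.PosSemidef) :
    G.correlation.PosSemidef := by
  simpa [Matrix.correlation] using hG.mul_mul_conjTranspose_same (diagonal fun i => (√(G i i))⁻¹)

theorem Matrix.PosSemidef.trace_correlation_le {G : Matrix m m ℝ} (hG : G.PosSemidef) :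
    G.correlation.trace ≤ Fintype.card m := by
  have hdiag (i : m) : G.correlation i i ≤ 1 := by
    have : G.correlation i i = G i i / √(G i i) ^ 2 := by
      simp [Matrix.correlation, div_eq_mul_inv]; ring
    rw [this, Real.sq_sqrt hG.diag_nonneg]
    exact div_self_le_one _
  calc G.correlation.trace = ∑ i, G.correlation i i := rfl
    _ ≤ ∑ _i : m, (1 : ℝ) := Finset.sum_le_sum fun i _ => hdiag i
    _ = Fintype.card m := by simp

theorem Matrix.PosSemidef.diagonal_sqrt_mul_correlation_mul {G : Matrix m m ℝ}
    (hG : G.PosSemidef) :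
    diagonal (fun i => √(G i i)) * G.correlation * diagonal (fun i => √(G i i)) = G := by
  have hzero {i : m} (hi : √(G i i) = 0) : G i i = 0 := (Real.sqrt_eq_zero hG.diag_nonneg).mp hi
  ext i j
  simp only [Matrix.correlation, diagonal_mul, mul_diagonal]
  by_cases hij : √(G i i) = 0 ∨ √(G j j) = 0
  · have hdiag : G i i * G j j = 0 := by rcases hij with h | h <;> simp [hzero h]
    have hGij : G i j = 0 :=
      pow_eq_zero_iff two_ne_zero |>.mp (le_antisymm (hdiag ▸ hG.sq_apply_le i j) (sq_nonneg _))
    rcases hij with h | h <;> simp [h, hGij]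
  obtain ⟨hi, hj⟩ := not_or.mp hij
  field_simp

theorem Matrix.PosSemidef.finrank_le_of_sub_diagonal_pos {G : Matrix m m ℝ} (hG : G.PosSemidef)
    {β : ℝ} (hβ : 0 < β) (V : Submodule ℝ (EuclideanSpace ℝ m))
    (hV : ∀ x ∈ V, x ≠ 0 → 0 < ⟪x, toEuclideanLin (G - (1 / β) • diagonal G.diag) x⟫_ℝ) :
    (finrank ℝ V : ℝ) ≤ β * Fintype.card m := by
  set R := toEuclideanLin G.correlation
  set Dh := toEuclideanLin (diagonal fun i => √(G i i))
  have hDh : Dh.IsSymmetric := isSymmetric_toEuclideanLin_iff.mpr (isHermitian_diagonal _)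
  have hD_quad (x) : ⟪x, toEuclideanLin (diagonal G.diag) x⟫_ℝ = ‖Dh x‖ ^ 2 := by
    have hD : diagonal G.diag = diagonal (fun i => √(G i i)) * diagonal fun i => √(G i i) := by
      rw [diagonal_mul_diagonal]
      exact congrArg diagonal (funext fun i => (Real.mul_self_sqrt hG.diag_nonneg).symm)
    rw [hD, toLpLin_mul_same, LinearMap.comp_apply, ← hDh, real_inner_self_eq_norm_sq]
  have hG_quad (x) : ⟪x, toEuclideanLin G x⟫_ℝ = ⟪Dh x, R (Dh x)⟫_ℝ := by
    conv_lhs => rw [← hG.diagonal_sqrt_mul_correlation_mul, toLpLin_mul_same, toLpLin_mul_same]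
    rw [LinearMap.comp_apply, LinearMap.comp_apply, ← hDh]
  have hV_scaled (x) (hx : x ∈ V) (hx0 : x ≠ 0) : ‖Dh x‖ ^ 2 < β * ⟪Dh x, R (Dh x)⟫_ℝ := by
    have := mul_pos hβ (hV x hx hx0)
    rw [map_sub, map_smul, LinearMap.sub_apply, LinearMap.smul_apply, inner_sub_right,
      inner_smul_right, mul_sub, ← mul_assoc, mul_one_div_cancel hβ.ne', one_mul, hD_quad,
      hG_quad] at this
    linarith
  have hinj : Function.Injective (Dh.domRestrict V) := by
    rw [← LinearMap.ker_eq_bot, Submodule.eq_bot_iff]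
    rintro ⟨x, hx⟩ hx0
    by_contra hne
    have hDx : Dh x = 0 := by simpa [Subtype.ext_iff] using hx0
    simpa [hDx] using hV_scaled x hx fun h => hne (Subtype.ext h)
  have hV_map : ∀ y ∈ V.map Dh, ‖y‖ ^ 2 ≤ β * ⟪y, R y⟫_ℝ := by
    rintro _ ⟨x, hx, rfl⟩
    by_cases hx0 : x = 0
    · simp [hx0]
    · exact (hV_scaled x hx hx0).le
  calc (finrank ℝ V : ℝ) = finrank ℝ (V.map Dh) := by
        rw [← LinearMap.range_domRestrict, LinearMap.finrank_range_of_inj hinj]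
    _ ≤ β * G.correlation.trace := by
        simpa [R, trace_toEuclideanLin] using
          (isPositive_toEuclideanLin_iff.mpr hG.correlation).finrank_le_mul_trace hβ.le _ hV_map
    _ ≤ β * Fintype.card m := mul_le_mul_of_nonneg_left hG.trace_correlation_le hβ.le

end Correlation

theorem QuadraticForm.exists_pos_nonpos_finrank_add_eq {K M : Type*} [Field K] [LinearOrder K]
    [IsStrictOrderedRing K] [AddCommGroup M] [Module K M] (Q : QuadraticForm K M)
    (S : Submodule K M) [FiniteDimensional K S] :
    ∃ V W : Submodule K M, W ≤ S ∧ (∀ x ∈ V, x ≠ 0 → 0 < Q x) ∧ (∀ x ∈ W, Q x ≤ 0) ∧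
      finrank K V + finrank K W = finrank K S := by
  classical
  have : Invertible (2 : K) := invertibleOfNonzero two_ne_zero
  obtain ⟨w, ⟨e⟩⟩ := QuadraticForm.equivalent_weightedSumSquares (Q.restrict S)
  set f : (Fin (finrank K S) → K) →ₗ[K] M := S.subtype ∘ₗ e.symm.toLinearEquiv.toLinearMap
  have hf : Function.Injective f := S.subtype_injective.comp e.symm.toLinearEquiv.injective
  have hQf (v) : Q (f v) = ∑ i, w i * (v i * v i) := by
    have h := e.symm.map_app v
    rw [QuadraticMap.restrict_apply, QuadraticMap.weightedSumSquares_apply] at h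
    exact h
  have hfinrank (s : Set (Fin (finrank K S))) :
      finrank K ((Pi.spanSubset K s).map f) = s.ncard := by
    rw [← (Submodule.equivMapOfInjective f hf _).finrank_eq, Pi.dim_spanSubset]
  refine ⟨(Pi.spanSubset K {i | 0 < w i}).map f, (Pi.spanSubset K {i | 0 < w i}ᶜ).map f,
    ?_, ?_, ?_, ?_⟩
  · rintro _ ⟨v, -, rfl⟩
    exact (e.symm v).2
  · rintro _ ⟨v, hv, rfl⟩ hfv
    rw [SetLike.mem_coe, Pi.mem_spanSubset_iff] at hv
    obtain ⟨i, hi⟩ : ∃ i, v i ≠ 0 := by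
      by_contra! h
      exact hfv (by simp [show v = 0 from funext h])
    have hwi : 0 < w i := by
      by_contra hwi
      exact hi (hv i hwi)
    rw [hQf]
    refine Finset.sum_pos' (fun j _ => ?_) ⟨i, Finset.mem_univ i, mul_pos hwi (mul_self_pos.mpr hi)⟩
    by_cases hj : 0 < w j
    · exact mul_nonneg hj.le (mul_self_nonneg _)
    · simp [hv j hj]
  · rintro _ ⟨v, hv, rfl⟩
    rw [SetLike.mem_coe, Pi.mem_spanSubset_iff] at hv
    rw [hQf]
    refine Finset.sum_nonpos fun j _ => ?_
    by_cases hj : 0 < w j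
    · simp [hv j (by simpa using hj)]
    · exact mul_nonpos_of_nonpos_of_nonneg (not_lt.mp hj) (mul_self_nonneg _)
  · rw [hfinrank, hfinrank, Set.ncard_add_ncard_compl, Nat.card_eq_fintype_card,
      Fintype.card_fin]

theorem Matrix.PosSemidef.norm_sq_le_inner_of_sum_vecMulVec {m ι : Type*} [Fintype m]
    [DecidableEq m] [Fintype ι] {w : ι → m → ℝ} {η : ι → ℝ} {A Q : Matrix m m ℝ}
    (h : (∑ k, η k • vecMulVec (w k) (w k) + A + Q - 1).PosSemidef)
    {x : EuclideanSpace ℝ m} (hx : ∀ k, w k ⬝ᵥ x.ofLp = 0)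
    (hA : ⟪x, toEuclideanLin A x⟫_ℝ ≤ 0) : ‖x‖ ^ 2 ≤ ⟪x, toEuclideanLin Q x⟫_ℝ := by
  have hpos := (isPositive_toEuclideanLin_iff.mpr h).inner_nonneg_right x
  have hsum_zero : toEuclideanLin (∑ k, η k • vecMulVec (w k) (w k)) x = 0 := by
    ext i
    simp [Matrix.toLpLin_apply, vecMulVec_mulVec, hx]
  simp only [map_add, map_sub, LinearMap.add_apply, LinearMap.sub_apply, inner_add_right,
    inner_sub_right, hsum_zero, inner_zero_right, toLpLin_one, LinearMap.id_apply,
    real_inner_self_eq_norm_sq] at hpos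
  linarith

theorem Matrix.le_finrank_ker_toEuclideanLin_add {l n : ℕ} (M : Matrix (Fin l) (Fin n) ℝ) :
    n ≤ finrank ℝ (LinearMap.ker (toEuclideanLin M)) + l := by
  have h1 := LinearMap.finrank_range_add_finrank_ker (toEuclideanLin M)
  have h2 := (LinearMap.range (toEuclideanLin M)).finrank_le
  rw [finrank_euclideanSpace_fin] at h1 h2
  omega

theorem dual_sdp_lower_bound_general (n l : ℕ) (δ β : ℝ)
    (hl : (l : ℝ) = δ * n) (hβ : β ∈ Set.Ioo (0 : ℝ) (1 - δ))
    (w : Fin l → Fin n → ℝ) (η : Fin l → ℝ)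
    (G : Matrix (Fin n) (Fin n) ℝ) (hG : G.PosSemidef)
    (q : Fin n → ℝ) (hq : ∀ i, 0 ≤ q i)
    (hfeas : ((∑ k, η k • Matrix.vecMulVec (w k) (w k)) + G
        - (1 / β) • Matrix.diagonal (fun i => G i i) + Matrix.diagonal q
        - (1 : Matrix (Fin n) (Fin n) ℝ)).PosSemidef) :
    (1 - δ - β) * n ≤ ∑ i, q i := by
  set A := G - (1 / β) • diagonal G.diag
  obtain ⟨V, W, hWS, hV_pos, hW_nonpos, hVW⟩ :=
    QuadraticForm.exists_pos_nonpos_finrank_add_eq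
      (LinearMap.BilinMap.toQuadraticMap ((innerₗ _).compl₂ (toEuclideanLin A)))
      (LinearMap.ker (toEuclideanLin (Matrix.of w)))
  have hV : (finrank ℝ V : ℝ) ≤ β * n := by
    simpa using hG.finrank_le_of_sub_diagonal_pos hβ.1 V hV_pos
  have hW : (finrank ℝ W : ℝ) ≤ ∑ i, q i := by
    have hfeas' : (∑ k, η k • vecMulVec (w k) (w k) + A + diagonal q - 1).PosSemidef := by
      rwa [← add_sub_assoc]
    simpa [trace_toEuclideanLin] using
      (isPositive_toEuclideanLin_iff.mpr (PosSemidef.diagonal hq)).finrank_le_mul_trace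
        zero_le_one W fun x hx => by
          rw [one_mul]
          refine hfeas'.norm_sq_le_inner_of_sum_vecMulVec (fun k => ?_) (hW_nonpos x hx)
          simpa [Matrix.mulVec] using congrArg (· k) (LinearMap.mem_ker.mp (hWS hx))
  have hS : (n : ℝ) ≤ finrank ℝ V + finrank ℝ W + l := by
    exact_mod_cast hVW ▸ (Matrix.of w).le_finrank_ker_toEuclideanLin_add
  linarith

/-- Dual lower bound: if `ℓ = δn`, `β ∈ (0, 1-δ)`, and `(η, G, q)` is feasible for
the dual program, i.e. `G ⪰ 0`, `q ≥ 0` and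
`∑ₖ ηₖ wₖwₖᵀ + G - (1/β)·diag(G) + ∑ᵢ qᵢ eᵢeᵢᵀ ⪰ I`, then
`∑ᵢ qᵢ ≥ (1 - δ - β)n`. -/
theorem dual_sdp_lower_bound (n l : ℕ) (δ β : ℝ) (hδ0 : 0 ≤ δ) (hδ1 : δ < 1)
    (hl : (l : ℝ) = δ * n) (hβ : β ∈ Set.Ioo (0 : ℝ) (1 - δ))
    (w : Fin l → Fin n → ℝ) (η : Fin l → ℝ)
    (G : Matrix (Fin n) (Fin n) ℝ) (hG : G.PosSemidef)
    (q : Fin n → ℝ) (hq : ∀ i, 0 ≤ q i)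
    (hfeas : ((∑ k, η k • Matrix.vecMulVec (w k) (w k)) + G
        - (1 / β) • Matrix.diagonal (fun i => G i i) + Matrix.diagonal q
        - (1 : Matrix (Fin n) (Fin n) ℝ)).PosSemidef) :
    (1 - δ - β) * n ≤ ∑ i, q i :=
  dual_sdp_lower_bound_general n l δ β hl hβ w η G hG q hq hfeas
end

section
/- Existence of universal vector colorings: let 0 ≤ δ < 1, β ∈ (0, 1−δ), and w_1,...,w_ℓ ∈ ℝ^n with ℓ = δn. Then there exist vectors u_1,...,u_n (in some Euclidean space) such that (i) ∑_i w_k(i)u_i = 0 for every k; (ii) for every b ∈ ℝ^n, ||∑_i b(i)u_i||_2^2 ≤ (1/β)∑_i b(i)^2||u_i||_2^2; (iii) ||u_i||_2 ≤ 1 for all i and ∑_i ||u_i||_2^2 ≥ (1 − δ − β)n. -/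
/-!
Reweight the coordinates by `d ∈ [0,1]ⁿ`: put `zᵢ = √dᵢ eᵢ`, let `V` be the span of the vectors
`∑ᵢ w_k(i) zᵢ` and take `uᵢ = zᵢ - P_V zᵢ`. Then (i) holds because `∑ᵢ w_k(i) uᵢ` is the
component orthogonal to `V` of a vector of `V`; `‖∑ bᵢ uᵢ‖² ≤ ∑ bᵢ² dᵢ` because `1 - P_V` is a
contraction; and `‖uᵢ‖² = dᵢ (1 - τᵢ)` with `τᵢ = ‖P_V eᵢ‖²` the leverage scores, whose sum is
`dim V ≤ ℓ`. So it suffices to find `d` with `τᵢ ≤ 1 - β` for all `i` (then `‖uᵢ‖² ≥ β dᵢ`,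
which gives (ii)) and `τᵢ ≥ 1 - β` wherever `dᵢ < 1` (then `∑ dᵢ (1 - τᵢ) ≥ n - ℓ - βn`).

Such a `d` maximises `∑ dᵢ` under the leverage constraints, written as quadratic inequalities in
an auxiliary `x ∈ ℝ^ℓ`. After regularising the constraints by `ε‖x‖²` a maximiser is tight at
every unsaturated coordinate, and the bound on `∑ ‖uᵢ‖²` survives `ε → 0` because this sum is
upper semicontinuous in `d`.
-/

open scoped RealInnerProductSpace Topology
open Finset Filter Matrix

theorem nonpos_of_forall_le_mul {a b c : ℝ} (hc : 0 < c) (h : ∀ t ∈ Set.Ioo 0 c, a ≤ b * t) :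
    a ≤ 0 := by
  have hlim : Tendsto (fun t => b * t) (𝓝[>] 0) (𝓝 0) := by
    simpa using ((continuous_const_mul b).tendsto 0).mono_left nhdsWithin_le_nhds
  exact ge_of_tendsto hlim (eventually_of_mem (Ioo_mem_nhdsGT hc) h)

namespace Submodule

variable {E : Type*} [NormedAddCommGroup E] [InnerProductSpace ℝ E]
  (K : Submodule ℝ E) [K.HasOrthogonalProjection]

theorem real_inner_starProjection_self (z : E) :
    ⟪z, K.starProjection z⟫ = ‖K.starProjection z‖ ^ 2 := by
  have h := K.starProjection_inner_eq_zero z _ (K.starProjection_apply_mem z)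
  rw [inner_sub_left, real_inner_self_eq_norm_sq] at h
  linarith

theorem real_inner_sq_le_norm_starProjection_sq_mul {z v : E} (hv : v ∈ K) :
    ⟪z, v⟫ ^ 2 ≤ ‖K.starProjection z‖ ^ 2 * ‖v‖ ^ 2 := by
  have h : ⟪z, v⟫ = ⟪K.starProjection z, v⟫ := by
    rw [inner_starProjection_left_eq_right, starProjection_eq_self_iff.mpr hv]
  rw [h, ← mul_pow, ← sq_abs]
  exact pow_le_pow_left₀ (abs_nonneg _) (abs_real_inner_le_norm _ _) 2

theorem norm_sub_starProjection_le {z v : E} (hv : v ∈ K) :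
    ‖z - K.starProjection z‖ ≤ ‖z - v‖ := by
  rw [starProjection_minimal]
  exact ciInf_le ⟨0, Set.forall_mem_range.2 fun _ => norm_nonneg _⟩ (⟨v, hv⟩ : K)

theorem norm_sub_starProjection_sq (z : E) :
    ‖z - K.starProjection z‖ ^ 2 = ‖z‖ ^ 2 - ‖K.starProjection z‖ ^ 2 := by
  rw [norm_sq_eq_add_norm_sq_starProjection z K, starProjection_orthogonal_val]
  ring

theorem sum_norm_starProjection_sq_eq_finrank [FiniteDimensional ℝ E] {ι : Type*} [Fintype ι]
    (b : OrthonormalBasis ι ℝ E) :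
    ∑ i, ‖K.starProjection (b i)‖ ^ 2 = Module.finrank ℝ K := by
  have hproj : LinearMap.IsProj K (K.starProjection : E →ₗ[ℝ] E) :=
    ⟨K.starProjection_apply_mem, fun _ hx => starProjection_eq_self_iff.mpr hx⟩
  rw [← hproj.trace, LinearMap.trace_eq_sum_inner _ b]
  simp [real_inner_starProjection_self]

end Submodule

namespace VectorColoring

variable {ι κ : Type*} [Fintype ι] [Fintype κ] (w : Matrix κ ι ℝ)

noncomputable def scaledBasis (d : ι → ℝ) (i : ι) : EuclideanSpace ℝ ι :=
  √(d i) • EuclideanSpace.basisFun ι ℝ i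

noncomputable def rowMap (d : ι → ℝ) : (κ → ℝ) →ₗ[ℝ] EuclideanSpace ℝ ι :=
  Fintype.linearCombination ℝ (scaledBasis d) ∘ₗ w.vecMulLinear

noncomputable abbrev rowSpace (d : ι → ℝ) : Submodule ℝ (EuclideanSpace ℝ ι) :=
  LinearMap.range (rowMap w d)

noncomputable def coloring (d : ι → ℝ) (i : ι) : EuclideanSpace ℝ ι :=
  scaledBasis d i - (rowSpace w d).starProjection (scaledBasis d i)

noncomputable def leverage (d : ι → ℝ) (i : ι) : ℝ :=
  ‖(rowSpace w d).starProjection (EuclideanSpace.basisFun ι ℝ i)‖ ^ 2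

def quadForm (d : ι → ℝ) (x : κ → ℝ) : ℝ := ∑ i, d i * (x ᵥ* w) i ^ 2

/-- For `ε = 0` the constraint at `i` amounts to `leverage w d i ≤ 1 - β`; the term `ε ‖x‖²`
lets every coordinate with `dᵢ = 0` be raised a little. -/
def feasibleSet (β ε : ℝ) : Set (ι → ℝ) :=
  {d | d ∈ Set.Icc 0 1 ∧
    ∀ i x, d i * (x ᵥ* w) i ^ 2 ≤ (1 - β) * (quadForm w d x + ε * ∑ k, x k ^ 2)}

theorem rowMap_apply (d : ι → ℝ) (x : κ → ℝ) :
    rowMap w d x = ∑ i, (x ᵥ* w) i • scaledBasis d i :=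
  rfl

theorem sum_smul_scaledBasis_apply (d b : ι → ℝ) (j : ι) :
    (∑ i, b i • scaledBasis d i) j = b j * √(d j) := by
  classical
  simp [scaledBasis, Pi.single_apply, mul_comm]

theorem norm_sum_smul_scaledBasis_sq {d : ι → ℝ} (hd : 0 ≤ d) (b : ι → ℝ) :
    ‖∑ i, b i • scaledBasis d i‖ ^ 2 = ∑ i, d i * b i ^ 2 := by
  simp only [EuclideanSpace.real_norm_sq_eq, sum_smul_scaledBasis_apply, mul_pow,
    Real.sq_sqrt (hd _), mul_comm]

theorem inner_basisFun_rowMap (d : ι → ℝ) (x : κ → ℝ) (i : ι) :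
    ⟪EuclideanSpace.basisFun ι ℝ i, rowMap w d x⟫ = (x ᵥ* w) i * √(d i) := by
  rw [EuclideanSpace.basisFun_inner, rowMap_apply, sum_smul_scaledBasis_apply]

theorem norm_rowMap_sq {d : ι → ℝ} (hd : 0 ≤ d) (x : κ → ℝ) :
    ‖rowMap w d x‖ ^ 2 = quadForm w d x :=
  norm_sum_smul_scaledBasis_sq hd _

theorem rowMap_single [DecidableEq κ] (d : ι → ℝ) (k : κ) :
    rowMap w d (Pi.single k 1) = ∑ i, w k i • scaledBasis d i := by
  rw [rowMap_apply, Matrix.single_one_vecMul]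
  rfl

theorem sum_smul_coloring (d b : ι → ℝ) :
    ∑ i, b i • coloring w d i =
      ∑ i, b i • scaledBasis d i - (rowSpace w d).starProjection (∑ i, b i • scaledBasis d i) := by
  simp [coloring, smul_sub, sum_sub_distrib, map_sum, map_smul]

theorem sum_smul_coloring_eq_zero (d : ι → ℝ) (k : κ) : ∑ i, w k i • coloring w d i = 0 := by
  classical
  have hmem : ∑ i, w k i • scaledBasis d i ∈ rowSpace w d := ⟨Pi.single k 1, rowMap_single w d k⟩
  rw [sum_smul_coloring, Submodule.starProjection_eq_self_iff.mpr hmem, sub_self]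

theorem norm_sum_smul_coloring_sq_le {d : ι → ℝ} (hd : 0 ≤ d) (b : ι → ℝ) :
    ‖∑ i, b i • coloring w d i‖ ^ 2 ≤ ∑ i, d i * b i ^ 2 := by
  rw [sum_smul_coloring, ← norm_sum_smul_scaledBasis_sq hd]
  refine pow_le_pow_left₀ (norm_nonneg _) ?_ 2
  have h := (rowSpace w d).norm_sub_starProjection_le
    (z := ∑ i, b i • scaledBasis d i) (Submodule.zero_mem _)
  rwa [sub_zero] at h

theorem norm_coloring_sq {d : ι → ℝ} (hd : 0 ≤ d) (i : ι) :
    ‖coloring w d i‖ ^ 2 = d i * (1 - leverage w d i) := by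
  rw [coloring, Submodule.norm_sub_starProjection_sq, scaledBasis, map_smul, norm_smul, norm_smul,
    leverage, mul_pow, mul_pow, Real.norm_eq_abs, sq_abs, Real.sq_sqrt (hd i),
    (EuclideanSpace.basisFun ι ℝ).orthonormal.1 i]
  ring

theorem leverage_nonneg (d : ι → ℝ) (i : ι) : 0 ≤ leverage w d i := sq_nonneg _

theorem leverage_le_one (d : ι → ℝ) (i : ι) : leverage w d i ≤ 1 := by
  rw [leverage, sq_le_one_iff_abs_le_one, abs_norm,
    ← (EuclideanSpace.basisFun ι ℝ).orthonormal.1 i]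
  exact Submodule.norm_starProjection_apply_le _ _

theorem sum_leverage_le_card (d : ι → ℝ) : ∑ i, leverage w d i ≤ Fintype.card κ := by
  simp only [leverage]
  rw [Submodule.sum_norm_starProjection_sq_eq_finrank, Nat.cast_le,
    ← Module.finrank_fintype_fun_eq_card ℝ]
  exact LinearMap.finrank_range_le _

theorem mul_sq_vecMul_le_leverage_mul {d : ι → ℝ} (hd : 0 ≤ d) (i : ι) (x : κ → ℝ) :
    d i * (x ᵥ* w) i ^ 2 ≤ leverage w d i * quadForm w d x := by
  have h := (rowSpace w d).real_inner_sq_le_norm_starProjection_sq_mul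
    (z := EuclideanSpace.basisFun ι ℝ i) (LinearMap.mem_range_self (rowMap w d) x)
  rwa [inner_basisFun_rowMap, norm_rowMap_sq w hd, mul_pow, Real.sq_sqrt (hd i), mul_comm] at h

theorem leverage_le_of_mem_feasibleSet {β : ℝ} (hβ : β ≤ 1) {d : ι → ℝ}
    (hd : d ∈ feasibleSet w β 0) (i : ι) : leverage w d i ≤ 1 - β := by
  obtain ⟨x, hx⟩ := (rowSpace w d).starProjection_apply_mem (EuclideanSpace.basisFun ι ℝ i)
  have hlev : leverage w d i = (x ᵥ* w) i * √(d i) := by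
    rw [leverage, ← Submodule.real_inner_starProjection_self, ← hx, inner_basisFun_rowMap]
  have hq : leverage w d i = quadForm w d x := by
    rw [leverage, ← hx, norm_rowMap_sq w hd.1.1]
  have hfeas := hd.2 i x
  have hsq : leverage w d i ^ 2 = d i * (x ᵥ* w) i ^ 2 := by
    rw [hlev, mul_pow, Real.sq_sqrt (hd.1.1 i), mul_comm]
  nlinarith [leverage_nonneg w d i]

theorem quadForm_add_single [DecidableEq ι] (d : ι → ℝ) (i : ι) (t : ℝ) (x : κ → ℝ) :
    quadForm w (d + Pi.single i t) x = quadForm w d x + t * (x ᵥ* w) i ^ 2 := by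
  simp [quadForm, add_mul, sum_add_distrib, Pi.single_apply]

theorem add_single_mem_feasibleSet [DecidableEq ι] {β ε t : ℝ} {d : ι → ℝ} {i : ι}
    (hβ : β ≤ 1) (hd : d ∈ feasibleSet w β ε) (ht : 0 ≤ t) (hle : d i + t ≤ 1)
    (hx : ∀ x, (d i + β * t) * (x ᵥ* w) i ^ 2 ≤ (1 - β) * (quadForm w d x + ε * ∑ k, x k ^ 2)) :
    d + Pi.single i t ∈ feasibleSet w β ε := by
  obtain ⟨⟨hd0, hd1⟩, hfeas⟩ := hd
  refine ⟨⟨fun j => ?_, fun j => ?_⟩, fun j x => ?_⟩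
  · by_cases hj : j = i
    · subst hj; simpa using add_nonneg (hd0 j) ht
    · simpa [hj] using hd0 j
  · by_cases hj : j = i
    · subst hj; simpa using hle
    · simpa [hj] using hd1 j
  have hgrow : 0 ≤ (1 - β) * (t * (x ᵥ* w) i ^ 2) := by
    have := sq_nonneg ((x ᵥ* w) i); have := sub_nonneg.2 hβ; positivity
  rw [quadForm_add_single]
  by_cases hj : j = i
  · subst hj
    have := hx x
    simp only [Pi.add_apply, Pi.single_eq_same]
    nlinarith
  · have := hfeas j x
    simp only [Pi.add_apply, Pi.single_eq_of_ne hj, add_zero]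
    nlinarith

theorem one_sub_le_leverage_of_isMaxOn {β ε : ℝ} (hβ0 : 0 < β) (hβ1 : β < 1) (hε : 0 < ε)
    {d : ι → ℝ} (hd : d ∈ feasibleSet w β ε)
    (hmax : IsMaxOn (fun d => ∑ i, d i) (feasibleSet w β ε) d) {i : ι} (hi : d i < 1) :
    1 - β ≤ leverage w d i := by
  classical
  set τ := leverage w d i
  set C := ∑ k, w k i ^ 2
  have hd0 : 0 ≤ d := hd.1.1
  have hτ0 : 0 ≤ τ := leverage_nonneg w d i
  have hC0 : 0 ≤ C := sum_nonneg fun _ _ => sq_nonneg _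
  -- For small `t > 0` the point `d + t eᵢ` is not feasible; a violated constraint gives two
  -- bounds linear in `t`, and letting `t → 0` yields `dᵢ > 0` and then `τ ≥ 1 - β`.
  have key : ∀ t ∈ Set.Ioo 0 (1 - d i),
      (1 - β - τ) * d i ≤ β * τ * t ∧ (1 - β) * ε - C * d i ≤ β * C * t := by
    rintro t ⟨ht0, ht1⟩
    obtain ⟨x, hx⟩ : ∃ x, (1 - β) * (quadForm w d x + ε * ∑ k, x k ^ 2) <
        (d i + β * t) * (x ᵥ* w) i ^ 2 := by
      by_contra! h
      have := hmax (add_single_mem_feasibleSet w hβ1.le hd ht0.le (by linarith) h)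
      simp [sum_add_distrib] at this
      linarith
    have hdt : 0 ≤ d i + β * t := add_nonneg (hd0 i) (mul_pos hβ0 ht0).le
    set s := (x ᵥ* w) i
    set X := ∑ k, x k ^ 2
    set q := quadForm w d x
    have hq : 0 ≤ q := sum_nonneg fun j _ => mul_nonneg (hd0 j) (sq_nonneg _)
    have hX : 0 ≤ X := sum_nonneg fun _ _ => sq_nonneg _
    have hCS : d i * s ^ 2 ≤ τ * q := mul_sq_vecMul_le_leverage_mul w hd0 i x
    have hsC : s ^ 2 ≤ X * C := by
      simpa [s, vecMul, dotProduct] using sum_mul_sq_le_sq_mul_sq univ x (fun k => w k i)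
    have hs : 0 < s ^ 2 := by
      have hpos : 0 < (d i + β * t) * s ^ 2 :=
        lt_of_le_of_lt (mul_nonneg (by linarith) (by positivity)) hx
      exact pos_of_mul_pos_right hpos hdt
    have hXpos : 0 < X := by
      by_contra! h
      nlinarith
    constructor
    · refine le_of_mul_le_mul_right ?_ hs
      nlinarith [mul_le_mul_of_nonneg_left hx.le hτ0, mul_nonneg hτ0 (mul_nonneg hε.le hX)]
    · refine le_of_mul_le_mul_right ?_ hXpos
      nlinarith [mul_le_mul_of_nonneg_left hsC hdt]
  have hA := nonpos_of_forall_le_mul (sub_pos.2 hi) fun t ht => (key t ht).1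
  have hB := nonpos_of_forall_le_mul (sub_pos.2 hi) fun t ht => (key t ht).2
  have hdpos : 0 < d i := by
    by_contra! h
    have : d i = 0 := le_antisymm h (hd0 i)
    rw [this] at hB
    nlinarith
  nlinarith

theorem card_sub_sub_le_sum_mul_one_sub {d τ : ι → ℝ} {β m : ℝ} (hβ : 0 ≤ β)
    (hd : d ∈ Set.Icc 0 1) (hτ : ∀ i, τ i ≤ 1) (htight : ∀ i, d i < 1 → 1 - β ≤ τ i)
    (hsum : ∑ i, τ i ≤ m) :
    Fintype.card ι - m - β * Fintype.card ι ≤ ∑ i, d i * (1 - τ i) := by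
  calc (Fintype.card ι : ℝ) - m - β * Fintype.card ι ≤ ∑ i, (1 - τ i - β) := by
        simp only [sum_sub_distrib, sum_const, card_univ, nsmul_eq_mul, mul_one]
        linarith
    _ ≤ ∑ i, d i * (1 - τ i) := sum_le_sum fun i _ => by
        have hd0 : 0 ≤ d i := hd.1 i
        have hd1 : d i ≤ 1 := hd.2 i
        rcases hd1.lt_or_eq with h | h
        · nlinarith [htight i h, hτ i]
        · rw [h]; linarith

theorem isClosed_feasibleSet_graph (β : ℝ) :
    IsClosed {p : (ι → ℝ) × ℝ | p.1 ∈ feasibleSet w β p.2} := by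
  have h : {p : (ι → ℝ) × ℝ | p.1 ∈ feasibleSet w β p.2} = Prod.fst ⁻¹' Set.Icc 0 1 ∩
      ⋂ i, ⋂ x, {p : (ι → ℝ) × ℝ | p.1 i * (x ᵥ* w) i ^ 2 ≤
        (1 - β) * (quadForm w p.1 x + p.2 * ∑ k, x k ^ 2)} := by
    ext; simp [feasibleSet]
  rw [h]
  refine (isClosed_Icc.preimage continuous_fst).inter
    (isClosed_iInter fun i => isClosed_iInter fun x =>
      isClosed_le (by fun_prop) (by simp only [quadForm]; fun_prop))

theorem exists_mem_feasibleSet_of_pos {β ε : ℝ} (hβ0 : 0 < β) (hβ1 : β < 1) (hε : 0 < ε) :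
    ∃ d ∈ feasibleSet w β ε, Fintype.card ι - Fintype.card κ - β * Fintype.card ι ≤
      ∑ i, ‖coloring w d i‖ ^ 2 := by
  have hzero : (0 : ι → ℝ) ∈ feasibleSet w β ε := by
    refine ⟨⟨le_rfl, zero_le_one⟩, fun i x => ?_⟩
    simp only [Pi.zero_apply, zero_mul, quadForm, zero_add, sum_const_zero]
    exact mul_nonneg (by linarith) (mul_nonneg hε.le (sum_nonneg fun _ _ => sq_nonneg _))
  have hcpt : IsCompact (feasibleSet w β ε) :=
    isCompact_Icc.of_isClosed_subset
      ((isClosed_feasibleSet_graph w β).preimage (continuous_id.prodMk continuous_const))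
      fun d hd => hd.1
  obtain ⟨d, hd, hmax⟩ := hcpt.exists_isMaxOn ⟨0, hzero⟩
    (by fun_prop : Continuous fun d : ι → ℝ => ∑ i, d i).continuousOn
  refine ⟨d, hd, ?_⟩
  simp only [norm_coloring_sq w hd.1.1]
  exact card_sub_sub_le_sum_mul_one_sub hβ0.le hd.1 (leverage_le_one w d)
    (fun i hi => one_sub_le_leverage_of_isMaxOn w hβ0 hβ1 hε hd hmax hi) (sum_leverage_le_card w d)

@[fun_prop]
theorem continuous_scaledBasis (i : ι) : Continuous fun d : ι → ℝ => scaledBasis d i := by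
  unfold scaledBasis; fun_prop

/-- `‖coloring w d' i‖` is the distance from `scaledBasis d' i` to the row space, hence at most
its distance to a fixed combination of the rows, which is continuous in `d'`. -/
theorem upperSemicontinuous_sum_norm_coloring_sq :
    UpperSemicontinuous fun d : ι → ℝ => ∑ i, ‖coloring w d i‖ ^ 2 := by
  intro d y hy
  choose x hx using fun i => (rowSpace w d).starProjection_apply_mem (scaledBasis d i)
  set G := fun d' : ι → ℝ => ∑ i, ‖scaledBasis d' i - rowMap w d' (x i)‖ ^ 2
  have hG : Continuous G := by simp only [G, rowMap_apply]; fun_prop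
  have hGd : G d = ∑ i, ‖coloring w d i‖ ^ 2 := by simp only [G, coloring, hx]
  have hle (d' : ι → ℝ) : ∑ i, ‖coloring w d' i‖ ^ 2 ≤ G d' :=
    sum_le_sum fun i _ => pow_le_pow_left₀ (norm_nonneg _)
      ((rowSpace w d').norm_sub_starProjection_le (LinearMap.mem_range_self _ _)) 2
  have hy' : G d < y := by rw [hGd]; exact hy
  filter_upwards [(hG.tendsto d).eventually (eventually_lt_nhds hy')] with d' hd'
  exact (hle d').trans_lt hd'

theorem exists_mem_feasibleSet_zero {β : ℝ} (hβ0 : 0 < β) (hβ1 : β < 1) :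
    ∃ d ∈ feasibleSet w β 0, Fintype.card ι - Fintype.card κ - β * Fintype.card ι ≤
      ∑ i, ‖coloring w d i‖ ^ 2 := by
  set c : ℝ := Fintype.card ι - Fintype.card κ - β * Fintype.card ι
  choose D hD using fun m : ℕ =>
    exists_mem_feasibleSet_of_pos w hβ0 hβ1 (Nat.one_div_pos_of_nat (n := m))
  obtain ⟨d, -, φ, hφ, hlim⟩ := isCompact_Icc.tendsto_subseq fun m => (hD m).1.1
  have hclosed : IsClosed {p : (ι → ℝ) × ℝ |
      p.1 ∈ feasibleSet w β p.2 ∧ c ≤ ∑ i, ‖coloring w p.1 i‖ ^ 2} :=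
    (isClosed_feasibleSet_graph w β).inter
      (((upperSemicontinuous_sum_norm_coloring_sq w).isClosed_preimage c).preimage continuous_fst)
  exact ⟨d, hclosed.mem_of_tendsto
    (hlim.prodMk_nhds (tendsto_one_div_add_atTop_nhds_zero_nat.comp hφ.tendsto_atTop))
    (Eventually.of_forall fun m => hD (φ m))⟩

theorem norm_coloring_le_one {d : ι → ℝ} (hd : d ∈ Set.Icc 0 1) (i : ι) :
    ‖coloring w d i‖ ≤ 1 := by
  refine (pow_le_one_iff_of_nonneg (norm_nonneg _) two_ne_zero).1 ?_
  have hd0 : 0 ≤ d i := hd.1 i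
  have hd1 : d i ≤ 1 := hd.2 i
  rw [norm_coloring_sq w hd.1]
  nlinarith [leverage_nonneg w d i, leverage_le_one w d i]

theorem norm_sum_smul_coloring_sq_le_of_mem_feasibleSet {β : ℝ} (hβ0 : 0 < β) (hβ1 : β ≤ 1)
    {d : ι → ℝ} (hd : d ∈ feasibleSet w β 0) (b : ι → ℝ) :
    ‖∑ i, b i • coloring w d i‖ ^ 2 ≤ 1 / β * ∑ i, b i ^ 2 * ‖coloring w d i‖ ^ 2 := by
  refine (norm_sum_smul_coloring_sq_le w hd.1.1 b).trans ?_
  rw [mul_sum]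
  refine sum_le_sum fun i _ => ?_
  have hu : β * d i ≤ ‖coloring w d i‖ ^ 2 := by
    have hd0 : 0 ≤ d i := hd.1.1 i
    rw [norm_coloring_sq w hd.1.1]
    nlinarith [leverage_le_of_mem_feasibleSet w hβ1 hd i]
  rw [div_mul_eq_mul_div, one_mul, le_div_iff₀ hβ0]
  nlinarith [sq_nonneg (b i)]

end VectorColoring

theorem exists_universal_vector_coloring_general (n l : ℕ) (δ β : ℝ) (hδ0 : 0 ≤ δ)
    (hβ : β ∈ Set.Ioo (0 : ℝ) (1 - δ)) (hl : (l : ℝ) = δ * n)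
    (w : Fin l → Fin n → ℝ) :
    ∃ u : Fin n → EuclideanSpace ℝ (Fin n),
      (∀ k, ∑ i, w k i • u i = 0) ∧
      (∀ b : Fin n → ℝ, ‖∑ i, b i • u i‖ ^ 2 ≤ (1 / β) * ∑ i, (b i) ^ 2 * ‖u i‖ ^ 2) ∧
      (∀ i, ‖u i‖ ≤ 1) ∧ (1 - δ - β) * n ≤ ∑ i, ‖u i‖ ^ 2 := by
  have hβ1 : β < 1 := by linarith [hβ.2]
  obtain ⟨d, hd, htrace⟩ := VectorColoring.exists_mem_feasibleSet_zero w hβ.1 hβ1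
  refine ⟨VectorColoring.coloring w d, VectorColoring.sum_smul_coloring_eq_zero w d,
    VectorColoring.norm_sum_smul_coloring_sq_le_of_mem_feasibleSet w hβ.1 hβ1.le hd,
    VectorColoring.norm_coloring_le_one w hd.1, ?_⟩
  rw [Fintype.card_fin, Fintype.card_fin, hl] at htrace
  linarith

/-- Theorem 5 (Universal Vector Colorings): for `0 ≤ δ < 1`, `β ∈ (0, 1-δ)` and any
`ℓ = δn` linear constraints `w₁,…,w_ℓ ∈ ℝⁿ`, there exist vectors `u₁,…,uₙ` with
(i) `∑ᵢ wₖ(i)uᵢ = 0` for every `k`;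
(ii) `‖∑ᵢ b(i)uᵢ‖² ≤ (1/β)∑ᵢ b(i)²‖uᵢ‖²` for every `b ∈ ℝⁿ`;
(iii) `‖uᵢ‖ ≤ 1` for all `i` and `∑ᵢ ‖uᵢ‖² ≥ (1-δ-β)n`. -/
theorem exists_universal_vector_coloring (n l : ℕ) (δ β : ℝ) (hδ0 : 0 ≤ δ)
    (hδ1 : δ < 1) (hβ : β ∈ Set.Ioo (0 : ℝ) (1 - δ)) (hl : (l : ℝ) = δ * n)
    (w : Fin l → Fin n → ℝ) :
    ∃ u : Fin n → EuclideanSpace ℝ (Fin n),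
      (∀ k, ∑ i, w k i • u i = 0) ∧
      (∀ b : Fin n → ℝ, ‖∑ i, b i • u i‖ ^ 2 ≤ (1 / β) * ∑ i, (b i) ^ 2 * ‖u i‖ ^ 2) ∧
      (∀ i, ‖u i‖ ≤ 1) ∧ (1 - δ - β) * n ≤ ∑ i, ‖u i‖ ^ 2 :=
  exists_universal_vector_coloring_general n l δ β hδ0 hβ hl w
end

section
/- Potential decrease in the discrepancy walk: Suppose at each step t, given the current coloring x_{t−1} ∈ [−1,1]^n, vectors u_i^t with ||u_i^t||_2 ≤ 1 satisfy ∑_i ||u_i^t||_2^2 ≥ c > 0, and the update is x_t(i) = x_{t−1}(i) + γ⟨r_t, u_i^t⟩ with r_t a uniform random ±1 vector independent of the past. Then with G_t = ∑_{i=1}^n (1 − x_t(i)^2), we have E[G_t | F_{t−1}] ≤ G_{t−1} − γ^2 c, and consequently E[G_T] ≤ (1 − γ^2 c/n)^T · G_0 whenever G_t ≤ n for all t. -/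
open Finset

namespace DWPD

noncomputable def sgn (v : Bool) : ℝ := if v then 1 else -1

lemma sgn_not (v : Bool) : sgn (!v) = - sgn v := by cases v <;> simp [sgn]

lemma sgn_sq (v : Bool) : sgn v ^ 2 = 1 := by cases v <;> simp [sgn]

lemma flip_invol {m : ℕ} (j : Fin m) :
    Function.Involutive (fun b : Fin m → Bool => Function.update b j (!(b j))) := by
  intro b; funext k
  by_cases h : k = j
  · subst h; simp
  · simp [Function.update_of_ne h]

noncomputable def flipAt {m : ℕ} (j : Fin m) : (Fin m → Bool) ≃ (Fin m → Bool) :=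
  (flip_invol j).toPerm

lemma sum_sgn_mul {m : ℕ} (j : Fin m) (H : (Fin m → Bool) → ℝ)
    (hH : ∀ b, H (Function.update b j (!(b j))) = H b) :
    ∑ b : Fin m → Bool, sgn (b j) * H b = 0 := by
  have h := Equiv.sum_comp (flipAt j) (fun b => sgn (b j) * H b)
  have h2 : ∀ b : Fin m → Bool, sgn ((flipAt j b) j) * H (flipAt j b)
      = - (sgn (b j) * H b) := by
    intro b
    have : (flipAt j b) j = !(b j) := by simp [flipAt, Function.Involutive.toPerm]
    rw [show H (flipAt j b) = H b from hH b, this, sgn_not]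
    ring
  rw [Finset.sum_congr rfl (fun b _ => h2 b), Finset.sum_neg_distrib] at h
  linarith

lemma sum_sgn {m : ℕ} (j : Fin m) : ∑ b : Fin m → Bool, sgn (b j) = 0 := by
  have := sum_sgn_mul j (fun _ => (1:ℝ)) (fun _ => rfl)
  simpa using this

lemma sum_sgn_sgn {m : ℕ} {j k : Fin m} (h : k ≠ j) :
    ∑ b : Fin m → Bool, sgn (b j) * sgn (b k) = 0 := by
  exact sum_sgn_mul j (fun b => sgn (b k)) (fun b => by
    show sgn (Function.update b j (!(b j)) k) = sgn (b k)
    rw [Function.update_of_ne h])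

lemma card_bool_fun (m : ℕ) : ∑ _b : Fin m → Bool, (1:ℝ) = 2 ^ m := by
  simp [Fintype.card_fun]

lemma sum_dot_zero {m : ℕ} (v : Fin m → ℝ) :
    ∑ b : Fin m → Bool, ∑ j, sgn (b j) * v j = 0 := by
  rw [Finset.sum_comm]
  refine Finset.sum_eq_zero fun j _ => ?_
  rw [← Finset.sum_mul, sum_sgn, zero_mul]

lemma sum_dot_sq {m : ℕ} (v : Fin m → ℝ) :
    ∑ b : Fin m → Bool, (∑ j, sgn (b j) * v j) ^ 2 = 2 ^ m * ∑ j, v j ^ 2 := by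
  have expand : ∀ b : Fin m → Bool,
      (∑ j, sgn (b j) * v j) ^ 2 = ∑ j, ∑ k, (sgn (b j) * sgn (b k)) * (v j * v k) := by
    intro b
    rw [sq, Finset.sum_mul_sum]
    exact Finset.sum_congr rfl fun j _ => Finset.sum_congr rfl fun k _ => by ring
  rw [Finset.sum_congr rfl (fun b _ => expand b), Finset.sum_comm]
  have inner : ∀ j : Fin m,
      ∑ b : Fin m → Bool, ∑ k, (sgn (b j) * sgn (b k)) * (v j * v k)
        = 2 ^ m * v j ^ 2 := by
    intro j
    rw [Finset.sum_comm]
    rw [Finset.sum_eq_single j]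
    · have : ∀ b : Fin m → Bool, (sgn (b j) * sgn (b j)) * (v j * v j)
          = v j ^ 2 := by
        intro b; have := sgn_sq (b j); nlinarith [sgn_sq (b j)]
      rw [Finset.sum_congr rfl (fun b _ => this b), Finset.sum_const]
      simp [Fintype.card_fun]
    · intro k _ hk
      rw [← Finset.sum_mul, sum_sgn_sgn hk, zero_mul]
    · intro h; exact absurd (Finset.mem_univ j) h
  rw [Finset.sum_congr rfl (fun j _ => inner j), ← Finset.mul_sum]

lemma key {m : ℕ} (a γ : ℝ) (v : Fin m → ℝ) :
    ∑ b : Fin m → Bool, (1 - (a + γ * ∑ j, sgn (b j) * v j) ^ 2)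
      = 2 ^ m * (1 - a ^ 2) - γ ^ 2 * (2 ^ m * ∑ j, v j ^ 2) := by
  have h : ∀ b : Fin m → Bool,
      (1 - (a + γ * ∑ j, sgn (b j) * v j) ^ 2)
        = (1 - a ^ 2) - (2*a*γ) * (∑ j, sgn (b j) * v j)
            - γ ^ 2 * (∑ j, sgn (b j) * v j) ^ 2 := by
    intro b; ring
  rw [Finset.sum_congr rfl (fun b _ => h b), Finset.sum_sub_distrib,
    Finset.sum_sub_distrib, ← Finset.mul_sum, ← Finset.mul_sum, sum_dot_zero,
    sum_dot_sq, Finset.sum_const]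
  simp [Fintype.card_fun]

lemma upd_invol {T m : ℕ} (t : Fin T) :
    Function.Involutive (fun p : (Fin T → Fin m → Bool) × (Fin m → Bool) =>
      (Function.update p.1 t p.2, p.1 t)) := by
  intro p
  simp [Function.update_idem]

noncomputable def updEquiv {T m : ℕ} (t : Fin T) :
    ((Fin T → Fin m → Bool) × (Fin m → Bool)) ≃
      ((Fin T → Fin m → Bool) × (Fin m → Bool)) :=
  (upd_invol t).toPerm

lemma sum_update {T m : ℕ} (t : Fin T) (f : (Fin T → Fin m → Bool) → ℝ) :
    ∑ ω : Fin T → Fin m → Bool, ∑ b : Fin m → Bool, f (Function.update ω t b)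
      = 2 ^ m * ∑ ω, f ω := by
  have h := Equiv.sum_comp (updEquiv (m := m) t) (fun p => f p.1)
  have h2 : ∀ p : (Fin T → Fin m → Bool) × (Fin m → Bool),
      (updEquiv t p).1 = Function.update p.1 t p.2 := fun p => rfl
  rw [Finset.sum_congr rfl (fun p _ => congrArg f (h2 p))] at h
  calc ∑ ω : Fin T → Fin m → Bool, ∑ b : Fin m → Bool, f (Function.update ω t b)
      = ∑ p : (Fin T → Fin m → Bool) × (Fin m → Bool), f (Function.update p.1 t p.2) := by
        rw [Fintype.sum_prod_type]
    _ = ∑ p : (Fin T → Fin m → Bool) × (Fin m → Bool), f p.1 := h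
    _ = ∑ ω : Fin T → Fin m → Bool, ∑ _b : Fin m → Bool, f ω := by
        rw [Fintype.sum_prod_type]
    _ = 2 ^ m * ∑ ω, f ω := by
        simp [Finset.sum_const, Fintype.card_fun, Finset.mul_sum]

end DWPD

/-- Potential decrease in the discrepancy walk (Lemma 11). The randomness is modelled
explicitly: `ω : Fin T → Fin m → Bool` lists the `T` independent uniform `±1` vectors
`r_t` (with sign `1` for `true`, `-1` for `false`). The fractional colorings `x t` and
the vector colorings `u t` are adapted: they depend only on the signs of rounds `< t`.
The update rule is `x_{t+1}(i) = x_t(i) + γ⟨r_t, uᵢᵗ⟩`. If `‖uᵢᵗ‖ ≤ 1` and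
`∑ᵢ ‖uᵢᵗ‖² ≥ c`, then with `G_t = ∑ᵢ (1 - x_t(i)²)`:
(a) the conditional expectation of `G_{t+1}` given the first `t` rounds is at most
`G_t - γ²c`, and (b) `E[G_T] ≤ (1 - γ²c/n)^T · G_0`. -/
theorem discrepancy_walk_potential_decrease (n m T : ℕ) (hn : 0 < n)
    (γ c : ℝ) (hγ : 0 < γ) (hc : 0 < c) (hstep : γ ^ 2 * c / n ≤ 1)
    (x : ℕ → (Fin T → Fin m → Bool) → Fin n → ℝ)
    (u : ℕ → (Fin T → Fin m → Bool) → Fin n → Fin m → ℝ)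
    (hxadapt : ∀ (t : ℕ) ω ω', (∀ s : Fin T, (s : ℕ) < t → ω s = ω' s) → x t ω = x t ω')
    (huadapt : ∀ (t : ℕ) ω ω', (∀ s : Fin T, (s : ℕ) < t → ω s = ω' s) → u t ω = u t ω')
    (hxbound : ∀ t ω i, |x t ω i| ≤ 1)
    (hunorm : ∀ t ω i, ∑ j, (u t ω i j) ^ 2 ≤ 1)
    (husum : ∀ t ω, c ≤ ∑ i, ∑ j, (u t ω i j) ^ 2)
    (hupdate : ∀ (t : Fin T) ω i,
      x ((t : ℕ) + 1) ω i
        = x (t : ℕ) ω i + γ * ∑ j, (if ω t j then (1 : ℝ) else -1) * u (t : ℕ) ω i j) :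
    (∀ (t : Fin T) (ω : Fin T → Fin m → Bool),
        (∑ b : Fin m → Bool,
            ∑ i, (1 - (x ((t : ℕ) + 1) (Function.update ω t b) i) ^ 2)) / 2 ^ m
          ≤ (∑ i, (1 - (x (t : ℕ) ω i) ^ 2)) - γ ^ 2 * c) ∧
    (∑ ω : Fin T → Fin m → Bool, ∑ i, (1 - (x T ω i) ^ 2)) / (2 ^ m) ^ T
      ≤ (1 - γ ^ 2 * c / n) ^ T * ∑ i, (1 - (x 0 (fun _ _ => false) i) ^ 2) := by
  classical
  have h2m : (0:ℝ) < 2 ^ m := by positivity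
  have parta : ∀ (t : Fin T) (ω : Fin T → Fin m → Bool),
      (∑ b : Fin m → Bool,
          ∑ i, (1 - (x ((t : ℕ) + 1) (Function.update ω t b) i) ^ 2)) / 2 ^ m
        ≤ (∑ i, (1 - (x (t : ℕ) ω i) ^ 2)) - γ ^ 2 * c := by
    intro t ω
    have hx : ∀ b, x (t:ℕ) (Function.update ω t b) = x (t:ℕ) ω := fun b =>
      hxadapt _ _ _ (fun s hs =>
        Function.update_of_ne (Fin.ne_of_val_ne (Nat.ne_of_lt hs)) _ _)
    have hu : ∀ b, u (t:ℕ) (Function.update ω t b) = u (t:ℕ) ω := fun b =>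
      huadapt _ _ _ (fun s hs =>
        Function.update_of_ne (Fin.ne_of_val_ne (Nat.ne_of_lt hs)) _ _)
    have hupd : ∀ b i, x ((t:ℕ)+1) (Function.update ω t b) i
        = x (t:ℕ) ω i + γ * ∑ j, DWPD.sgn (b j) * u (t:ℕ) ω i j := by
      intro b i
      have h := hupdate t (Function.update ω t b) i
      rw [hx, hu, Function.update_self] at h
      simpa [DWPD.sgn] using h
    have hsum : ∑ b : Fin m → Bool,
        ∑ i, (1 - (x ((t:ℕ)+1) (Function.update ω t b) i) ^ 2)
        = 2 ^ m * ((∑ i, (1 - (x (t:ℕ) ω i) ^ 2))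
            - γ ^ 2 * ∑ i, ∑ j, (u (t:ℕ) ω i j) ^ 2) := by
      rw [Finset.sum_comm]
      have hi : ∀ i, ∑ b : Fin m → Bool,
          (1 - (x ((t:ℕ)+1) (Function.update ω t b) i) ^ 2)
            = 2 ^ m * (1 - (x (t:ℕ) ω i) ^ 2)
              - γ ^ 2 * (2 ^ m * ∑ j, (u (t:ℕ) ω i j) ^ 2) := by
        intro i
        rw [Finset.sum_congr rfl (fun b _ => by rw [hupd b i])]
        exact DWPD.key _ _ _
      rw [Finset.sum_congr rfl (fun i _ => hi i), Finset.sum_sub_distrib,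
        ← Finset.mul_sum, ← Finset.mul_sum, ← Finset.mul_sum]
      ring
    rw [hsum, div_le_iff₀ h2m]
    nlinarith [mul_nonneg (le_of_lt h2m)
      (mul_nonneg (sq_nonneg γ) (sub_nonneg.2 (husum (t:ℕ) ω)))]
  refine ⟨parta, ?_⟩
  have hq0 : (0:ℝ) ≤ 1 - γ ^ 2 * c / n := sub_nonneg.2 hstep
  have hqpos : (0:ℝ) ≤ γ ^ 2 * c / n := by positivity
  have hGnn : ∀ (t : ℕ) ω, (0:ℝ) ≤ ∑ i, (1 - (x t ω i) ^ 2) :=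
    fun t ω => Finset.sum_nonneg fun i _ =>
      sub_nonneg.2 (by nlinarith [abs_le.1 (hxbound t ω i)])
  have hGle : ∀ (t : ℕ) ω, ∑ i, (1 - (x t ω i) ^ 2) ≤ (n:ℝ) := by
    intro t ω
    calc ∑ i, (1 - (x t ω i) ^ 2) ≤ ∑ _i : Fin n, (1:ℝ) :=
          Finset.sum_le_sum fun i _ => by nlinarith [sq_nonneg (x t ω i)]
      _ = (n:ℝ) := by simp
  have step : ∀ (k : ℕ) (hk : k < T),
      ∑ ω : Fin T → Fin m → Bool, ∑ i, (1 - (x (k+1) ω i) ^ 2)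
        ≤ (1 - γ ^ 2 * c / n) * ∑ ω : Fin T → Fin m → Bool, ∑ i, (1 - (x k ω i) ^ 2) := by
    intro k hk
    set t : Fin T := ⟨k, hk⟩ with ht
    have h1 : ∀ ω, ∑ b : Fin m → Bool, ∑ i, (1 - (x (k+1) (Function.update ω t b) i) ^ 2)
        ≤ 2 ^ m * ((1 - γ ^ 2 * c / n) * ∑ i, (1 - (x k ω i) ^ 2)) := by
      intro ω
      have ha := parta t ω
      simp only [ht, Fin.val_mk] at ha
      rw [div_le_iff₀ h2m] at ha
      have hG := hGle k ω
      have hqn : (γ ^ 2 * c / n) * (n:ℝ) = γ ^ 2 * c := by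
        field_simp
      have h2 : (∑ i, (1 - (x k ω i) ^ 2)) - γ ^ 2 * c
          ≤ (1 - γ ^ 2 * c / n) * ∑ i, (1 - (x k ω i) ^ 2) := by
        have := mul_le_mul_of_nonneg_left hG hqpos
        nlinarith
      nlinarith
    have hkey := DWPD.sum_update t (fun ω => ∑ i, (1 - (x (k+1) ω i) ^ 2))
    have hle : ∑ ω : Fin T → Fin m → Bool,
        ∑ b : Fin m → Bool, ∑ i, (1 - (x (k+1) (Function.update ω t b) i) ^ 2)
        ≤ ∑ ω : Fin T → Fin m → Bool,
            2 ^ m * ((1 - γ ^ 2 * c / n) * ∑ i, (1 - (x k ω i) ^ 2)) :=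
      Finset.sum_le_sum fun ω _ => h1 ω
    rw [hkey] at hle
    rw [← Finset.mul_sum, ← Finset.mul_sum] at hle
    exact le_of_mul_le_mul_left hle h2m
  have main : ∀ k, k ≤ T →
      ∑ ω : Fin T → Fin m → Bool, ∑ i, (1 - (x k ω i) ^ 2)
        ≤ (1 - γ ^ 2 * c / n) ^ k *
            ∑ ω : Fin T → Fin m → Bool, ∑ i, (1 - (x 0 ω i) ^ 2) := by
    intro k
    induction k with
    | zero => intro _; simp
    | succ k ih =>
      intro hk
      have hkT : k < T := hk
      have h1 := step k hkT
      have h2 := ih (le_of_lt hkT)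
      calc ∑ ω : Fin T → Fin m → Bool, ∑ i, (1 - (x (k+1) ω i) ^ 2)
          ≤ (1 - γ ^ 2 * c / n) * ∑ ω : Fin T → Fin m → Bool, ∑ i, (1 - (x k ω i) ^ 2) := h1
        _ ≤ (1 - γ ^ 2 * c / n) * ((1 - γ ^ 2 * c / n) ^ k *
              ∑ ω : Fin T → Fin m → Bool, ∑ i, (1 - (x 0 ω i) ^ 2)) :=
            mul_le_mul_of_nonneg_left h2 hq0
        _ = (1 - γ ^ 2 * c / n) ^ (k+1) *
              ∑ ω : Fin T → Fin m → Bool, ∑ i, (1 - (x 0 ω i) ^ 2) := by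
            rw [pow_succ]; ring
  have hS0 : ∑ ω : Fin T → Fin m → Bool, ∑ i, (1 - (x 0 ω i) ^ 2)
      = ((2:ℝ) ^ m) ^ T * ∑ i, (1 - (x 0 (fun _ _ => false) i) ^ 2) := by
    have hx0 : ∀ ω, x 0 ω = x 0 (fun _ _ => false) := fun ω =>
      hxadapt 0 _ _ (fun s hs => absurd hs (Nat.not_lt_zero _))
    rw [Finset.sum_congr rfl (fun ω _ => by rw [hx0 ω]), Finset.sum_const]
    simp [Fintype.card_fun]
  have hM := main T le_rfl
  rw [hS0] at hM
  rw [div_le_iff₀ (by positivity)]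
  calc ∑ ω : Fin T → Fin m → Bool, ∑ i, (1 - (x T ω i) ^ 2)
      ≤ (1 - γ ^ 2 * c / n) ^ T *
          (((2:ℝ) ^ m) ^ T * ∑ i, (1 - (x 0 (fun _ _ => false) i) ^ 2)) := hM
    _ = (1 - γ ^ 2 * c / n) ^ T * (∑ i, (1 - (x 0 (fun _ _ => false) i) ^ 2)) * (2 ^ m) ^ T := by
        ring
end

section
/- Number of canonical boxes: for n points in ℝ^d and ℓ = 16(d + log₂ n)^{d−1}, the hierarchical canonical box construction (dyadic blocks nested along each coordinate) produces at most ∑_{types (i_1 ≥ ... ≥ i_d ≥ 0)} n/(2^{i_d}·ℓ) ≤ (2n/ℓ)·(d + log₂(n/ℓ))^{d−1} ≤ n/8 canonical boxes. -/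
/-!
A canonical box type is a non-increasing tuple `i₁ ≥ ⋯ ≥ i_d` with `2^{i₁} ℓ ≤ n`, so every entry
is at most `M = ⌊log₂ (n/ℓ)⌋`. Fixing the last entry `i_d`, the remaining `d - 1` entries range
over at most `(M + 1)^{d-1} ≤ (d + log₂ (n/ℓ))^{d-1}` values, while the per-type bounds
`n / (2^{i_d} ℓ)` summed over `i_d` form a geometric series of total at most `2n/ℓ`. The final
bound `n/8` holds because `log₂ (n/ℓ) ≤ log₂ n` and `ℓ` is exactly `16 (d + log₂ n)^{d-1}`.
-/

open Finset Real

lemma le_floor_logb_of_pow_le {b x : ℝ} (hb : 1 < b) {k : ℕ} (h : b ^ k ≤ x) :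
    k ≤ ⌊logb b x⌋₊ := by
  have hx : 0 < x := (pow_pos (by linarith) k).trans_le h
  exact Nat.le_floor <| (le_logb_iff_rpow_le hb hx).2 (by rwa [rpow_natCast])

lemma sum_apply_le_pow_mul_sum_range {ι : Type*} [Fintype ι] [DecidableEq ι] {K M : ℕ}
    (S : Finset (ι → Fin K)) (hS : ∀ s ∈ S, ∀ j, (s j : ℕ) ≤ M) (i : ι) {f : ℕ → ℝ}
    (hf : ∀ k, 0 ≤ f k) :
    ∑ s ∈ S, f (s i) ≤ (M + 1) ^ (Fintype.card ι - 1) * ∑ k ∈ range (M + 1), f k := by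
  have hval : Function.Injective fun (s : ι → Fin K) j => (s j : ℕ) :=
    Fin.val_injective.comp_left
  have hsub : S.image (fun s j => (s j : ℕ)) ⊆ Fintype.piFinset fun _ => range (M + 1) := by
    simp only [image_subset_iff, Fintype.mem_piFinset, mem_range, Nat.lt_succ_iff]
    exact hS
  calc ∑ s ∈ S, f (s i) = ∑ t ∈ S.image (fun s j => (s j : ℕ)), f (t i) :=
        (sum_image (f := fun t => f (t i)) fun _ _ _ _ h => hval h).symm
    _ ≤ ∑ t ∈ Fintype.piFinset (fun _ => range (M + 1)), f (t i) :=
        sum_le_sum_of_subset_of_nonneg hsub fun _ _ _ => hf _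
    _ = _ := by
        rw [Fintype.sum_piFinset_apply, card_range, nsmul_eq_mul, Nat.cast_pow, Nat.cast_succ]

lemma sum_range_div_two_pow_le {c : ℝ} (hc : 0 ≤ c) (N : ℕ) :
    ∑ k ∈ range N, c / 2 ^ k ≤ 2 * c := by
  simp_rw [div_eq_mul_one_div c, ← one_div_pow, ← mul_sum]
  nlinarith [sum_geometric_two_le N]

lemma two_mul_div_mul_pow_add_logb_div_le {c n L : ℝ} {m : ℕ} (hn : 0 < n)
    (hL : L = 16 * (c + logb 2 n) ^ m) (hL1 : 1 ≤ L) (hc : 0 ≤ c + logb 2 (n / L)) :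
    2 * n / L * (c + logb 2 (n / L)) ^ m ≤ n / 8 := by
  have hlog : logb 2 (n / L) ≤ logb 2 n := by
    rw [logb_div hn.ne' (by linarith)]
    linarith [logb_nonneg one_lt_two hL1]
  have hpow : (c + logb 2 n) ^ m = L / 16 := by rw [hL]; ring
  calc _ ≤ 2 * n / L * (c + logb 2 n) ^ m := by gcongr
    _ = n / 8 := by rw [hpow]; field_simp; ring

open Classical in
/-- Number of canonical boxes: with `ℓ = 16(d + log₂ n)^{d-1}`, summing the per-type
bound `n/(2^{i_d}·ℓ)` over all non-increasing type vectors `(i₁ ≥ … ≥ i_d ≥ 0)` with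
`2^{i₁}·ℓ ≤ n` gives at most `(2n/ℓ)·(d + log₂(n/ℓ))^{d-1} ≤ n/8` canonical boxes. -/
theorem canonical_box_count (n d : ℕ) (hd : 1 ≤ d)
    (L : ℝ) (hL : L = 16 * ((d : ℝ) + Real.logb 2 n) ^ (d - 1))
    (hLn : L ≤ (n : ℝ) / 8) :
    (∑ s ∈ Finset.univ.filter (fun s : Fin d → Fin (Nat.log 2 n + 1) =>
        (∀ j k : Fin d, j ≤ k → (s k : ℕ) ≤ (s j : ℕ)) ∧
        (2 : ℝ) ^ ((s ⟨0, by omega⟩ : ℕ)) * L ≤ n),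
      (n : ℝ) / (2 ^ ((s ⟨d - 1, by omega⟩ : ℕ)) * L))
      ≤ (2 * n / L) * ((d : ℝ) + Real.logb 2 ((n : ℝ) / L)) ^ (d - 1) ∧
    (2 * n / L) * ((d : ℝ) + Real.logb 2 ((n : ℝ) / L)) ^ (d - 1) ≤ (n : ℝ) / 8 := by
  have hd1 : (1 : ℝ) ≤ d := by exact_mod_cast hd
  have hX : 1 ≤ (d : ℝ) + logb 2 n := by
    have : 0 ≤ logb 2 (n : ℝ) := div_nonneg (log_natCast_nonneg n) (log_nonneg one_le_two)
    linarith
  have hL16 : 16 ≤ L := by nlinarith [one_le_pow₀ (n := d - 1) hX]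
  have hnL : 1 ≤ (n : ℝ) / L := (one_le_div (by linarith)).2 (by linarith)
  set M := ⌊logb 2 ((n : ℝ) / L)⌋₊
  have hM : (M : ℝ) + 1 ≤ d + logb 2 ((n : ℝ) / L) := by
    linarith [Nat.floor_le (logb_nonneg one_lt_two hnL)]
  refine ⟨?_, two_mul_div_mul_pow_add_logb_div_le (by linarith) hL (by linarith)
    (by linarith [logb_nonneg one_lt_two hnL])⟩
  calc _ ≤ ((M : ℝ) + 1) ^ (d - 1) * ∑ k ∈ range (M + 1), (n : ℝ) / (2 ^ k * L) := by
        refine (sum_apply_le_pow_mul_sum_range _ (fun s hs j => ?_) (⟨d - 1, by omega⟩ : Fin d)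
          (f := fun k => (n : ℝ) / (2 ^ k * L)) fun k => by positivity).trans_eq
          (by rw [Fintype.card_fin])
        obtain ⟨hmono, hfirst⟩ := (mem_filter.1 hs).2
        exact (hmono _ j (Nat.zero_le _)).trans
          (le_floor_logb_of_pow_le one_lt_two ((le_div_iff₀ (by linarith)).2 hfirst))
    _ ≤ ((M : ℝ) + 1) ^ (d - 1) * (2 * (n / L)) := by
        gcongr
        simpa only [mul_comm _ L, ← div_div] using
          sum_range_div_two_pow_le (by positivity : 0 ≤ (n : ℝ) / L) (M + 1)
    _ ≤ _ := by
        rw [mul_comm, ← mul_div_assoc]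
        gcongr
end
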